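/- arXiv:2211.07208 — 12 statements merged into one kernel-verified Lean document; each statement's English description precedes it below -/
import Mathlib

section
/- If Xⁿ is uniformly distributed on F₂ⁿ, then Xⁿ ⊕ H̃Xⁿ is uniformly distributed on the codebook C (a set of exactly 2^k elements). (Lemma 1(ii).) -/
/-!
Write `H = [A B]` and `x = (x₁, x₂)` with `x₁ ∈ F₂ᵏ`. Since `B⁻¹H x = B⁻¹A x₁ + x₂`, the map
`x ↦ x ⊕ H̃x` keeps `x₁` and overwrites `x₂` by the parity bits `B⁻¹A x₁`: it is the systematic
encoder `u ↦ (u, B⁻¹A u)` applied to `x₁`. A vector `c` lies in `C` exactly when `c₂ = B⁻¹A c₁`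
(over `F₂`, `-B⁻¹A = B⁻¹A`), so `C` is the injective image of the systematic encoder, of size
`2ᵏ`, and every codeword has exactly `2ˡ` preimages among the `2ᵏ⁺ˡ` inputs.
-/

/-- The matrix `H̃` whose first `k` rows are zero and whose last `n − k` rows
equal `B⁻¹ H`.  Coordinates of `F₂ⁿ` are indexed by `Fin k ⊕ Fin l`
(so `n = k + l`). -/
def Htilde {k l : ℕ} (H : Matrix (Fin l) (Fin k ⊕ Fin l) (ZMod 2))
    (Binv : Matrix (Fin l) (Fin l) (ZMod 2)) :
    Matrix (Fin k ⊕ Fin l) (Fin k ⊕ Fin l) (ZMod 2) :=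
  Matrix.of fun i j => Sum.elim (fun _ => (0 : ZMod 2)) (fun i' => (Binv * H) i' j) i

open Matrix Finset

theorem card_filter_comp_inl_eq {R ι κ : Type*} [Fintype R] [DecidableEq R] [Fintype ι]
    [DecidableEq ι] [Fintype κ] [DecidableEq κ] (u : ι → R) :
    #{x : ι ⊕ κ → R | x ∘ Sum.inl = u} = Fintype.card R ^ Fintype.card κ := by
  rw [← Fintype.card_fun, ← Finset.card_univ]
  refine Finset.card_nbij' (· ∘ Sum.inr) (Sum.elim u) (by simp) (by simp) ?_ ?_
  · intro x hx
    simp only [Finset.coe_filter, Finset.mem_univ, true_and, Set.mem_ofPred_eq] at hx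
    simp [← hx]
  · intro v _
    rfl

section SystematicEncoding

variable {R ι κ : Type*} [CommRing R] [Fintype ι]

def systematicEncoder (P : Matrix κ ι R) (u : ι → R) : ι ⊕ κ → R :=
  Sum.elim u (P *ᵥ u)

theorem systematicEncoder_injective (P : Matrix κ ι R) :
    Function.Injective (systematicEncoder P) := fun u v h => by
  simpa [systematicEncoder] using congrArg (· ∘ Sum.inl) h

theorem eq_systematicEncoder_iff (P : Matrix κ ι R) (c : ι ⊕ κ → R) :
    c = systematicEncoder P (c ∘ Sum.inl) ↔ c ∘ Sum.inr = P *ᵥ (c ∘ Sum.inl) := by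
  constructor
  · intro h
    rw [h]
    rfl
  · intro h
    ext (i | i)
    · rfl
    · exact congrFun h i

theorem card_filter_systematicEncoder_comp_inl_eq [Fintype R] [DecidableEq R] [DecidableEq ι]
    [Fintype κ] [DecidableEq κ] (P : Matrix κ ι R) (c : ι ⊕ κ → R) :
    #{x : ι ⊕ κ → R | systematicEncoder P (x ∘ Sum.inl) = c} =
      if c ∘ Sum.inr = P *ᵥ (c ∘ Sum.inl) then Fintype.card R ^ Fintype.card κ else 0 := by
  split_ifs with hc
  · rw [← eq_systematicEncoder_iff] at hc
    rw [← card_filter_comp_inl_eq (c ∘ Sum.inl)]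
    congr 1
    ext x
    conv_lhs => rw [hc]
    simp [(systematicEncoder_injective P).eq_iff]
  · rw [Finset.card_eq_zero, Finset.filter_eq_empty_iff]
    rintro x - rfl
    exact hc rfl

end SystematicEncoding

section ParityCheck

variable {R ι κ : Type*} [CommRing R] [Fintype ι] [Fintype κ] (H : Matrix κ (ι ⊕ κ) R)

theorem mulVec_eq_add_mulVec_comp (c : ι ⊕ κ → R) :
    H *ᵥ c = H.submatrix id Sum.inl *ᵥ (c ∘ Sum.inl) + H.submatrix id Sum.inr *ᵥ (c ∘ Sum.inr) := by
  ext i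
  simp [mulVec, dotProduct, Fintype.sum_sum_type]

variable [DecidableEq κ] (Binv : Matrix κ κ R)

theorem mul_mulVec_eq_add (hB : Binv * H.submatrix id Sum.inr = 1) (c : ι ⊕ κ → R) :
    (Binv * H) *ᵥ c = (Binv * H.submatrix id Sum.inl) *ᵥ (c ∘ Sum.inl) + c ∘ Sum.inr := by
  rw [← mulVec_mulVec, mulVec_eq_add_mulVec_comp, mulVec_add, mulVec_mulVec, mulVec_mulVec, hB,
    one_mulVec]

theorem mulVec_eq_zero_iff (hB : Binv * H.submatrix id Sum.inr = 1) (c : ι ⊕ κ → R) :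
    H *ᵥ c = 0 ↔ c ∘ Sum.inr = -(Binv * H.submatrix id Sum.inl) *ᵥ (c ∘ Sum.inl) := by
  have hBinv : Function.Injective (Binv *ᵥ ·) := fun v w h => by
    simpa [mulVec_mulVec, mul_eq_one_comm.mp hB] using congrArg (H.submatrix id Sum.inr *ᵥ ·) h
  rw [← hBinv.eq_iff, mulVec_mulVec, mul_mulVec_eq_add H Binv hB, mulVec_zero, neg_mulVec,
    eq_neg_iff_add_eq_zero, add_comm]

theorem card_filter_mulVec_eq_zero [Fintype R] [DecidableEq R] [DecidableEq ι]
    (hB : Binv * H.submatrix id Sum.inr = 1) :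
    #{c : ι ⊕ κ → R | H *ᵥ c = 0} = Fintype.card R ^ Fintype.card ι := by
  have : ({c : ι ⊕ κ → R | H *ᵥ c = 0} : Finset _) =
      univ.map ⟨_, systematicEncoder_injective (-(Binv * H.submatrix id Sum.inl))⟩ := by
    ext c
    simp only [mem_filter, mem_univ, true_and, mem_map, Function.Embedding.coeFn_mk]
    rw [mulVec_eq_zero_iff H Binv hB, ← eq_systematicEncoder_iff]
    exact ⟨fun h => ⟨_, h.symm⟩, fun ⟨u, hu⟩ => hu ▸ rfl⟩
  rw [this, card_map, card_univ, Fintype.card_fun]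

end ParityCheck

theorem Htilde_mulVec {k l : ℕ} (H : Matrix (Fin l) (Fin k ⊕ Fin l) (ZMod 2))
    (Binv : Matrix (Fin l) (Fin l) (ZMod 2)) (x : Fin k ⊕ Fin l → ZMod 2) :
    Htilde H Binv *ᵥ x = Sum.elim (0 : Fin k → ZMod 2) ((Binv * H) *ᵥ x) := by
  ext (i | i) <;> simp [Htilde, mulVec, dotProduct]

theorem add_Htilde_mulVec {k l : ℕ} (H : Matrix (Fin l) (Fin k ⊕ Fin l) (ZMod 2))
    (Binv : Matrix (Fin l) (Fin l) (ZMod 2)) (hB : Binv * H.submatrix id Sum.inr = 1)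
    (x : Fin k ⊕ Fin l → ZMod 2) :
    x + Htilde H Binv *ᵥ x = systematicEncoder (Binv * H.submatrix id Sum.inl) (x ∘ Sum.inl) := by
  ext (i | i)
  · simp [Htilde_mulVec, systematicEncoder]
  · simp only [Pi.add_apply, Htilde_mulVec, Sum.elim_inr, mul_mulVec_eq_add H Binv hB,
      systematicEncoder, Function.comp_apply]
    rw [add_comm ((_ *ᵥ _) i), CharTwo.add_cancel_left]

theorem stmt1_general (k l : ℕ)
    (H : Matrix (Fin l) (Fin k ⊕ Fin l) (ZMod 2))
    (Binv : Matrix (Fin l) (Fin l) (ZMod 2))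
    (hB' : Binv * H.submatrix id Sum.inr = 1) :
    (Finset.univ.filter
        (fun c : (Fin k ⊕ Fin l) → ZMod 2 => H.mulVec c = 0)).card = 2 ^ k ∧
    ∀ c : (Fin k ⊕ Fin l) → ZMod 2,
      ((Finset.univ.filter
          (fun x : (Fin k ⊕ Fin l) → ZMod 2 =>
            x + (Htilde H Binv).mulVec x = c)).card : ℝ)
          / (Fintype.card ((Fin k ⊕ Fin l) → ZMod 2) : ℝ)
        = if H.mulVec c = 0 then 1 / 2 ^ k else 0 := by
  have hP : -(Binv * H.submatrix id Sum.inl) = Binv * H.submatrix id Sum.inl := by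
    ext
    exact ZMod.neg_eq_self_mod_two _
  refine ⟨by simpa using card_filter_mulVec_eq_zero H Binv hB', fun c => ?_⟩
  simp_rw [add_Htilde_mulVec H Binv hB', card_filter_systematicEncoder_comp_inl_eq,
    mulVec_eq_zero_iff H Binv hB', hP]
  split_ifs
  · simp [pow_add, div_mul_cancel_right₀]
  · simp

/-- **Lemma 1(ii).**  If `Xⁿ` is uniform on `F₂ⁿ`, then `Xⁿ ⊕ H̃Xⁿ` is uniform
on the codebook `C = {c : Hc = 0}`, a set of exactly `2^k` elements:
the codebook has `2^k` elements, and for every `c` the probability that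
`Xⁿ ⊕ H̃Xⁿ = c` equals `1/2^k` if `c ∈ C` and `0` otherwise. -/
theorem stmt1 (k l : ℕ) (hl : 0 < l)
    (H : Matrix (Fin l) (Fin k ⊕ Fin l) (ZMod 2))
    (Binv : Matrix (Fin l) (Fin l) (ZMod 2))
    (hB : H.submatrix id Sum.inr * Binv = 1)
    (hB' : Binv * H.submatrix id Sum.inr = 1) :
    (Finset.univ.filter
        (fun c : (Fin k ⊕ Fin l) → ZMod 2 => H.mulVec c = 0)).card = 2 ^ k ∧
    ∀ c : (Fin k ⊕ Fin l) → ZMod 2,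
      ((Finset.univ.filter
          (fun x : (Fin k ⊕ Fin l) → ZMod 2 =>
            x + (Htilde H Binv).mulVec x = c)).card : ℝ)
          / (Fintype.card ((Fin k ⊕ Fin l) → ZMod 2) : ℝ)
        = if H.mulVec c = 0 then 1 / 2 ^ k else 0 :=
  stmt1_general k l H Binv hB'
end

section
/- Let ((Xᵢ,Yᵢ))_{i=1..n} be i.i.d. with law p(x,y) and let Vⁿ be i.i.d. uniform on F₂, independent of (Xⁿ,Yⁿ). Define Cⁿ = Xⁿ ⊕ Vⁿ ⊕ H̃Xⁿ ⊕ H̃Vⁿ and Uⁿ = Vⁿ ⊕ H̃Vⁿ ⊕ H̃Xⁿ. Then for every cⁿ in the codebook C, every uⁿ ∈ F₂ⁿ, and every yⁿ ∈ 𝒴ⁿ: P{Cⁿ = cⁿ, Uⁿ = uⁿ, Yⁿ = yⁿ} = 2^{−k} · ∏_{i=1}^{n} p(cᵢ ⊕ uᵢ, yᵢ). (Lemma 2.) -/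
/-! Over `F₂` the two equations defining the event `{Cⁿ = c, Uⁿ = u}` force `x = c + u`, and
since `H̃ c = 0` for a codeword the remaining one says that `v + u` lies in the kernel of `I + H̃`.
As `B⁻¹ H = [B⁻¹ A | I]`, that kernel consists of the vectors vanishing on the first `k`
coordinates, so exactly `2 ^ l` values of `v` contribute, each with weight
`2 ^ (-(k + l)) ∏ᵢ p (cᵢ + uᵢ, yᵢ)`. -/

open Matrix Finset

section CharTwo

variable {R n : Type*} [CommRing R] [CharP R 2] [Fintype n]

theorem mulVec_system_iff_of_charTwo (M : Matrix n n R) (x v c u : n → R) :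
    (x + v + M *ᵥ x + M *ᵥ v = c ∧ v + M *ᵥ v + M *ᵥ x = u) ↔
      (x = c + u ∧ (v + u) + M *ᵥ (v + u) = M *ᵥ c) := by
  have hx : x + v + M *ᵥ x + M *ᵥ v = c ∧ v + M *ᵥ v + M *ᵥ x = u ↔
      x = c + u ∧ v + M *ᵥ v + M *ᵥ x = u := by
    simp only [funext_iff, Pi.add_apply]
    grind
  rw [hx, and_congr_right_iff]
  rintro rfl
  simp only [funext_iff, Pi.add_apply, mulVec_add]
  grind

end CharTwo

section Htilde

variable {k l : ℕ} (H : Matrix (Fin l) (Fin k ⊕ Fin l) (ZMod 2))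
  (Binv : Matrix (Fin l) (Fin l) (ZMod 2))

@[simp]
theorem Htilde_mulVec_inl (z : Fin k ⊕ Fin l → ZMod 2) (i : Fin k) :
    (Htilde H Binv *ᵥ z) (Sum.inl i) = 0 := by
  simp [Htilde, mulVec, dotProduct]

@[simp]
theorem Htilde_mulVec_inr (z : Fin k ⊕ Fin l → ZMod 2) (j : Fin l) :
    (Htilde H Binv *ᵥ z) (Sum.inr j) = (Binv *ᵥ H *ᵥ z) j := by
  rw [mulVec_mulVec]
  rfl

theorem Htilde_mulVec_eq_zero {c : Fin k ⊕ Fin l → ZMod 2} (hc : H *ᵥ c = 0) :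
    Htilde H Binv *ᵥ c = 0 := by
  ext (i | j) <;> simp [hc]

variable {H Binv}

theorem Htilde_mulVec_elim_zero (hB' : Binv * H.submatrix id Sum.inr = 1) (w : Fin l → ZMod 2) :
    Htilde H Binv *ᵥ Sum.elim (0 : Fin k → ZMod 2) w = Sum.elim (0 : Fin k → ZMod 2) w := by
  have hHw : H *ᵥ Sum.elim (0 : Fin k → ZMod 2) w = H.submatrix id Sum.inr *ᵥ w := by
    ext j
    simp [mulVec, dotProduct]
  ext (i | j)
  · simp
  · simp [hHw, hB']

theorem add_Htilde_mulVec_eq_zero_iff (hB' : Binv * H.submatrix id Sum.inr = 1)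
    (z : Fin k ⊕ Fin l → ZMod 2) :
    z + Htilde H Binv *ᵥ z = 0 ↔ z ∘ Sum.inl = 0 := by
  constructor
  · intro h
    ext i
    simpa using congrFun h (Sum.inl i)
  · intro h
    have hz : z = Sum.elim (0 : Fin k → ZMod 2) (z ∘ Sum.inr) := by
      ext (i | j)
      · exact congrFun h i
      · rfl
    rw [hz, Htilde_mulVec_elim_zero hB']
    exact funext fun _ => CharTwo.add_self_eq_zero _

end Htilde

theorem card_filter_comp_inl_eq_s3 {α β γ : Type*} [Fintype α] [Fintype β] [Fintype γ]
    [DecidableEq α] [DecidableEq β] [DecidableEq γ] (a : α → γ) :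
    #{v : α ⊕ β → γ | v ∘ Sum.inl = a} = Fintype.card γ ^ Fintype.card β := by
  let e : {v : α ⊕ β → γ // v ∘ Sum.inl = a} ≃ (β → γ) :=
    { toFun := fun v => v.1 ∘ Sum.inr
      invFun := fun w => ⟨Sum.elim a w, rfl⟩
      left_inv := fun ⟨v, hv⟩ => by subst hv; simp
      right_inv := fun w => rfl }
  rw [← Fintype.card_subtype, Fintype.card_congr e, Fintype.card_fun]

theorem stmt3_general (k l : ℕ)
    (H : Matrix (Fin l) (Fin k ⊕ Fin l) (ZMod 2))
    (Binv : Matrix (Fin l) (Fin l) (ZMod 2))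
    (hB' : Binv * H.submatrix id Sum.inr = 1)
    (𝒴 : Type)
    (p : ZMod 2 → 𝒴 → ℝ)
    (c : (Fin k ⊕ Fin l) → ZMod 2) (hc : H.mulVec c = 0)
    (u : (Fin k ⊕ Fin l) → ZMod 2) (y : (Fin k ⊕ Fin l) → 𝒴) :
    ∑ x : (Fin k ⊕ Fin l) → ZMod 2, ∑ v : (Fin k ⊕ Fin l) → ZMod 2,
      (if x + v + (Htilde H Binv).mulVec x + (Htilde H Binv).mulVec v = c ∧
          v + (Htilde H Binv).mulVec v + (Htilde H Binv).mulVec x = u then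
        (∏ i, p (x i) (y i)) * ((1 : ℝ) / 2 ^ (k + l))
      else 0)
    = ((1 : ℝ) / 2 ^ k) * ∏ i, p (c i + u i) (y i) := by
  have key : ∀ x v, (x + v + Htilde H Binv *ᵥ x + Htilde H Binv *ᵥ v = c ∧
      v + Htilde H Binv *ᵥ v + Htilde H Binv *ᵥ x = u) ↔
        (x = c + u ∧ v ∘ Sum.inl = -(u ∘ Sum.inl)) := fun x v => by
    rw [mulVec_system_iff_of_charTwo, Htilde_mulVec_eq_zero H Binv hc,
      add_Htilde_mulVec_eq_zero_iff hB', Pi.add_comp, add_eq_zero_iff_eq_neg]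
  rw [Fintype.sum_eq_single (c + u) fun x hx => by simp [key, hx]]
  simp only [key, true_and, Pi.add_apply, ← Finset.sum_filter, Finset.sum_const,
    card_filter_comp_inl_eq_s3, ZMod.card, Fintype.card_fin, nsmul_eq_mul]
  push_cast
  field_simp
  ring

/-- **Lemma 2.**  Let `(Xᵢ,Yᵢ)` be i.i.d. with law `p(x,y)` and `Vⁿ` i.i.d.
uniform on `F₂` independent of `(Xⁿ,Yⁿ)`.  With
`Cⁿ = Xⁿ ⊕ Vⁿ ⊕ H̃Xⁿ ⊕ H̃Vⁿ` and `Uⁿ = Vⁿ ⊕ H̃Vⁿ ⊕ H̃Xⁿ`, for every `cⁿ`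
in the codebook, every `uⁿ`, and every `yⁿ`:
`P{Cⁿ = cⁿ, Uⁿ = uⁿ, Yⁿ = yⁿ} = 2^{−k} ∏ᵢ p(cᵢ ⊕ uᵢ, yᵢ)`. -/
theorem stmt3 (k l : ℕ) (hl : 0 < l)
    (H : Matrix (Fin l) (Fin k ⊕ Fin l) (ZMod 2))
    (Binv : Matrix (Fin l) (Fin l) (ZMod 2))
    (hB : H.submatrix id Sum.inr * Binv = 1)
    (hB' : Binv * H.submatrix id Sum.inr = 1)
    (𝒴 : Type) [Fintype 𝒴]
    (p : ZMod 2 → 𝒴 → ℝ) (hp0 : ∀ x y, 0 ≤ p x y)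
    (hp1 : ∑ x : ZMod 2, ∑ y : 𝒴, p x y = 1)
    (c : (Fin k ⊕ Fin l) → ZMod 2) (hc : H.mulVec c = 0)
    (u : (Fin k ⊕ Fin l) → ZMod 2) (y : (Fin k ⊕ Fin l) → 𝒴) :
    ∑ x : (Fin k ⊕ Fin l) → ZMod 2, ∑ v : (Fin k ⊕ Fin l) → ZMod 2,
      (if x + v + (Htilde H Binv).mulVec x + (Htilde H Binv).mulVec v = c ∧
          v + (Htilde H Binv).mulVec v + (Htilde H Binv).mulVec x = u then
        (∏ i, p (x i) (y i)) * ((1 : ℝ) / 2 ^ (k + l))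
      else 0)
    = ((1 : ℝ) / 2 ^ k) * ∏ i, p (c i + u i) (y i) :=
  stmt3_general k l H Binv hB' 𝒴 p c hc u y
end

section
/- Let X be a random variable with values in F₂ and Y a random variable with values in a finite set 𝒴 on a common probability space, and let V be uniformly distributed on F₂ and independent of the pair (X,Y). Set X̄ = X ⊕ V and Ȳ = (Y,V). Then X̄ is uniform on F₂ and the mutual information satisfies I[X̄ : Ȳ] = log 2 − H[X | Y] (entropy with natural logarithm; equivalently, in bits, I(X̄;Ȳ) = 1 − H(X|Y)). (Remark 3(iii): the symmetric capacity of the symmetrized channel equals 1 − H(X|Y).) -/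
/-! Work over any finite additive group `G` in place of `F₂`. The map `(x, y, v) ↦ (x + v, y, v)`
is a bijection of `G × 𝒴 × G`, so `H[X̄, Ȳ] = H[X, Y, V]`, and `Ȳ = (Y, V)`. As `V` is uniform on
`G` and independent of `(X, Y)`, these two entropies are `H[X, Y] + log |G|` and
`H[Y] + log |G|`, while `X̄` is uniform, so `H[X̄] = log |G|`. Hence
`I[X̄ : Ȳ] = log |G| + (H[Y] + log |G|) - (H[X, Y] + log |G|) = log |G| - H[X | Y]`. -/

/-- Shannon entropy (with natural logarithm) of a finitely supported pmf,
`H(f) = ∑ₐ −f(a) log f(a)`, as in Mathlib's entropy conventions. -/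
noncomputable def pmfEntropy {α : Type*} [Fintype α] (f : α → ℝ) : ℝ :=
  ∑ a, Real.negMulLog (f a)

open Finset Real

theorem pmfEntropy_const_inv_card (α : Type*) [Fintype α] [Nonempty α] :
    pmfEntropy (fun _ : α => (Fintype.card α : ℝ)⁻¹) = log (Fintype.card α) := by
  have hcard : (Fintype.card α : ℝ) ≠ 0 := by positivity
  simp only [pmfEntropy, sum_const, card_univ, nsmul_eq_mul, negMulLog, log_inv]
  field_simp

section Symmetrization

variable {G α 𝒴 : Type*} [AddGroup G] [Fintype G] [Fintype α] [Fintype 𝒴]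

theorem sum_negMulLog_mul_inv_card (f : α → ℝ) (hf : ∑ a, f a = 1) :
    ∑ a, ∑ _v : G, negMulLog (f a * (Fintype.card G : ℝ)⁻¹)
      = ∑ a, negMulLog (f a) + log (Fintype.card G) := by
  have hcard : (Fintype.card G : ℝ) ≠ 0 := by positivity
  have hterm : ∀ a, ∑ _v : G, negMulLog (f a * (Fintype.card G : ℝ)⁻¹)
      = negMulLog (f a) + f a * log (Fintype.card G) := fun a => by
    rw [sum_const, card_univ, nsmul_eq_mul, negMulLog_mul]
    simp only [negMulLog, log_inv]
    field_simp
  rw [sum_congr rfl fun a _ => hterm a, sum_add_distrib, ← sum_mul, hf, one_mul]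

theorem sum_sum_sum_comp_add {M : Type*} [AddCommMonoid M] (F : G → 𝒴 → G → M) :
    ∑ xb, ∑ y, ∑ v, F (xb + v) y v = ∑ x, ∑ y, ∑ v, F x y v := by
  calc ∑ xb, ∑ y, ∑ v, F (xb + v) y v = ∑ y, ∑ v, ∑ xb, F (xb + v) y v :=
        sum_comm.trans (sum_congr rfl fun y _ => sum_comm)
    _ = ∑ y, ∑ v, ∑ x, F x y v :=
        sum_congr rfl fun y _ => sum_congr rfl fun v _ =>
          Equiv.sum_comp (Equiv.addRight v) (fun x => F x y v)
    _ = ∑ x, ∑ y, ∑ v, F x y v :=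
        (sum_congr rfl fun y _ => sum_comm).trans sum_comm

theorem sum_symmetrized_eq_inv_card (r : G → 𝒴 → G → ℝ)
    (hr1 : ∑ x, ∑ y, ∑ v, r x y v = 1)
    (hV : ∀ x y v, r x y v = (∑ v', r x y v') * (Fintype.card G : ℝ)⁻¹) (xb : G) :
    ∑ y, ∑ v, r (xb + v) y v = (Fintype.card G : ℝ)⁻¹ := by
  calc ∑ y, ∑ v, r (xb + v) y v
      = ∑ y, ∑ v, (∑ v', r (xb + v) y v') * (Fintype.card G : ℝ)⁻¹ :=
        sum_congr rfl fun y _ => sum_congr rfl fun v _ => hV _ _ _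
    _ = (∑ x, ∑ y, ∑ v', r x y v') * (Fintype.card G : ℝ)⁻¹ := by
        simp only [← sum_mul]
        rw [sum_comm (s := univ (α := G))]
        exact congrArg (· * _) (sum_congr rfl fun y _ =>
          Equiv.sum_comp (Equiv.addLeft xb) (fun x => ∑ v', r x y v'))
    _ = (Fintype.card G : ℝ)⁻¹ := by rw [hr1, one_mul]

theorem pmfEntropy_symmetrized_output (r : G → 𝒴 → G → ℝ)
    (hr1 : ∑ x, ∑ y, ∑ v, r x y v = 1)
    (hV : ∀ x y v, r x y v = (∑ v', r x y v') * (Fintype.card G : ℝ)⁻¹) :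
    pmfEntropy (fun yv : 𝒴 × G => ∑ xb : G, r (xb + yv.2) yv.1 yv.2)
      = pmfEntropy (fun y : 𝒴 => ∑ x : G, ∑ v : G, r x y v) + log (Fintype.card G) := by
  have hmarg : ∀ y v, ∑ xb, r (xb + v) y v
      = (∑ x, ∑ v', r x y v') * (Fintype.card G : ℝ)⁻¹ := fun y v => by
    refine (Equiv.sum_comp (Equiv.addRight v) (fun x => r x y v)).trans ?_
    rw [sum_mul]
    exact sum_congr rfl fun x _ => hV x y v
  rw [pmfEntropy, Fintype.sum_prod_type]
  simp only [hmarg]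
  refine sum_negMulLog_mul_inv_card _ ?_
  rw [sum_comm, hr1]

theorem sum_negMulLog_symmetrized (r : G → 𝒴 → G → ℝ)
    (hr1 : ∑ x, ∑ y, ∑ v, r x y v = 1)
    (hV : ∀ x y v, r x y v = (∑ v', r x y v') * (Fintype.card G : ℝ)⁻¹) :
    ∑ xb : G, ∑ y : 𝒴, ∑ v : G, negMulLog (r (xb + v) y v)
      = ∑ x : G, ∑ y : 𝒴, negMulLog (∑ v : G, r x y v) + log (Fintype.card G) := by
  set c : ℝ := (Fintype.card G : ℝ)⁻¹
  calc ∑ xb : G, ∑ y : 𝒴, ∑ v : G, negMulLog (r (xb + v) y v)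
      = ∑ x : G, ∑ y : 𝒴, ∑ _v : G, negMulLog ((∑ v', r x y v') * c) := by
        rw [sum_sum_sum_comp_add (fun x y v => negMulLog (r x y v))]
        exact sum_congr rfl fun x _ => sum_congr rfl fun y _ => sum_congr rfl fun v _ => by
          rw [hV x y v]
    _ = ∑ a : G × 𝒴, ∑ _v : G, negMulLog ((∑ v', r a.1 a.2 v') * c) :=
        (Fintype.sum_prod_type' _).symm
    _ = ∑ a : G × 𝒴, negMulLog (∑ v', r a.1 a.2 v') + log (Fintype.card G) :=
        sum_negMulLog_mul_inv_card _
          (by rw [Fintype.sum_prod_type' (fun x y => ∑ v', r x y v'), hr1])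
    _ = _ := by rw [Fintype.sum_prod_type' (fun x y => negMulLog (∑ v', r x y v'))]

theorem mutualInfo_symmetrized (r : G → 𝒴 → G → ℝ)
    (hr1 : ∑ x, ∑ y, ∑ v, r x y v = 1)
    (hV : ∀ x y v, r x y v = (∑ v', r x y v') * (Fintype.card G : ℝ)⁻¹) :
    pmfEntropy (fun xb : G => ∑ y : 𝒴, ∑ v : G, r (xb + v) y v)
        + pmfEntropy (fun yv : 𝒴 × G => ∑ xb : G, r (xb + yv.2) yv.1 yv.2)
        - ∑ xb : G, ∑ y : 𝒴, ∑ v : G, negMulLog (r (xb + v) y v)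
      = log (Fintype.card G)
        - ((∑ x : G, ∑ y : 𝒴, negMulLog (∑ v : G, r x y v))
            - pmfEntropy (fun y : 𝒴 => ∑ x : G, ∑ v : G, r x y v)) := by
  simp only [sum_symmetrized_eq_inv_card r hr1 hV, pmfEntropy_const_inv_card,
    pmfEntropy_symmetrized_output r hr1 hV, sum_negMulLog_symmetrized r hr1 hV]
  ring

end Symmetrization

theorem stmt4_general (𝒴 : Type) [Fintype 𝒴]
    (r : ZMod 2 → 𝒴 → ZMod 2 → ℝ)
    (hr1 : ∑ x : ZMod 2, ∑ y : 𝒴, ∑ v : ZMod 2, r x y v = 1)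
    (hVindep : ∀ x y v, r x y v = (∑ v' : ZMod 2, r x y v') * (1 / 2)) :
    (∀ xb : ZMod 2, (∑ y : 𝒴, ∑ v : ZMod 2, r (xb + v) y v) = 1 / 2) ∧
    (pmfEntropy (fun xb : ZMod 2 => ∑ y : 𝒴, ∑ v : ZMod 2, r (xb + v) y v)
        + pmfEntropy (fun yv : 𝒴 × ZMod 2 => ∑ xb : ZMod 2, r (xb + yv.2) yv.1 yv.2)
        - ∑ xb : ZMod 2, ∑ y : 𝒴, ∑ v : ZMod 2, Real.negMulLog (r (xb + v) y v)
      = Real.log 2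
        - ((∑ x : ZMod 2, ∑ y : 𝒴, Real.negMulLog (∑ v : ZMod 2, r x y v))
            - pmfEntropy (fun y : 𝒴 => ∑ x : ZMod 2, ∑ v : ZMod 2, r x y v))) := by
  have hcard : (Fintype.card (ZMod 2) : ℝ) = 2 := by simp
  have hV : ∀ x y v, r x y v = (∑ v', r x y v') * (Fintype.card (ZMod 2) : ℝ)⁻¹ := by
    rw [hcard, inv_eq_one_div]
    exact hVindep
  refine ⟨fun xb => ?_, ?_⟩
  · rw [sum_symmetrized_eq_inv_card r hr1 hV xb, hcard, inv_eq_one_div]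
  · rw [mutualInfo_symmetrized r hr1 hV, hcard]

/-- **Remark 3(iii).**  Let `(X, Y, V)` have joint pmf `r` on
`F₂ × 𝒴 × F₂`, where `V` is uniform on `F₂` and independent of `(X, Y)`
(hypothesis `hVindep`).  Set `X̄ = X ⊕ V` and `Ȳ = (Y, V)`, so that the
joint law of `(X̄, Ȳ)` is `(x̄, (y, v)) ↦ r x̄⊕v y v`.  Then `X̄` is uniform
on `F₂`, and the mutual information
`I[X̄ : Ȳ] = H[X̄] + H[Ȳ] − H[X̄, Ȳ]` equals `log 2 − H[X | Y]`, where
`H[X | Y] = H[X, Y] − H[Y]` (all entropies with natural logarithm). -/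
theorem stmt4 (𝒴 : Type) [Fintype 𝒴]
    (r : ZMod 2 → 𝒴 → ZMod 2 → ℝ)
    (hr0 : ∀ x y v, 0 ≤ r x y v)
    (hr1 : ∑ x : ZMod 2, ∑ y : 𝒴, ∑ v : ZMod 2, r x y v = 1)
    (hVindep : ∀ x y v, r x y v = (∑ v' : ZMod 2, r x y v') * (1 / 2)) :
    (∀ xb : ZMod 2, (∑ y : 𝒴, ∑ v : ZMod 2, r (xb + v) y v) = 1 / 2) ∧
    (pmfEntropy (fun xb : ZMod 2 => ∑ y : 𝒴, ∑ v : ZMod 2, r (xb + v) y v)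
        + pmfEntropy (fun yv : 𝒴 × ZMod 2 => ∑ xb : ZMod 2, r (xb + yv.2) yv.1 yv.2)
        - ∑ xb : ZMod 2, ∑ y : 𝒴, ∑ v : ZMod 2, Real.negMulLog (r (xb + v) y v)
      = Real.log 2
        - ((∑ x : ZMod 2, ∑ y : 𝒴, Real.negMulLog (∑ v : ZMod 2, r x y v))
            - pmfEntropy (fun y : 𝒴 => ∑ x : ZMod 2, ∑ v : ZMod 2, r x y v))) :=
  stmt4_general 𝒴 r hr1 hVindep
end

section
/- Let (Xⁿ,Yⁿ) be i.i.d. with law p(x,y) and Vⁿ i.i.d. uniform on F₂, independent of (Xⁿ,Yⁿ). Define Zⁿ = H̃Xⁿ ⊕ Vⁿ ⊕ H̃Vⁿ and the Slepian–Wolf decoder output X̂ⁿ = φ(Zⁿ, Yⁿ) ⊕ Zⁿ. Then P{X̂ⁿ ≠ Xⁿ} = ε. (The Slepian–Wolf scheme with linear encoder x ↦ H̃x built from a point-to-point channel code for the symmetrized channel has average error probability exactly equal to that of the channel code.) -/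
open Finset Matrix

theorem AddMonoidHom.sum_comp_eq_card_ker_nsmul {G G' M : Type*} [AddGroup G] [Fintype G]
    [AddGroup G'] [DecidableEq G'] [AddCommMonoid M] (f : G →+ G') (F : G' → M) :
    ∑ g, F (f g) = Nat.card f.ker • ∑ h ∈ univ.image f, F h := by
  classical
  rw [sum_comp, smul_sum]
  refine sum_congr rfl fun h hh => ?_
  obtain ⟨a, -, rfl⟩ := mem_image.1 hh
  rw [← Nat.card_congr (f.fiberEquivKer a), Nat.card_eq_card_toFinset]
  congr 2
  ext
  simp

theorem AddMonoidHom.card_eq_card_ker_mul_card_image {G G' : Type*} [AddGroup G] [Fintype G]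
    [AddGroup G'] [DecidableEq G'] (f : G →+ G') :
    Fintype.card G = Nat.card f.ker * #(univ.image f) := by
  simpa only [sum_const, card_univ, smul_eq_mul, mul_one] using
    f.sum_comp_eq_card_ker_nsmul (fun _ => (1 : ℕ))

section Decoding

variable {ι 𝒴 : Type*} [Fintype ι] [DecidableEq ι] [Fintype 𝒴]
  (p : ZMod 2 → 𝒴 → ℝ) (φ : (ι → ZMod 2) → (ι → 𝒴) → (ι → ZMod 2))

/-- The weight of the event that the symmetrized channel, fed the codeword `c`, outputs
`(c + x, y)` and `φ` fails to recover `c`, summed over `y`. -/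
def decodingErrorMass (c x : ι → ZMod 2) : ℝ :=
  ∑ y : ι → 𝒴, if φ (c + x) y ≠ c then ∏ i, p (x i) (y i) else 0

theorem sum_channelError_eq (C : (ι → ZMod 2) → Prop) [DecidablePred C] (a : ℝ) :
    ∑ c : ι → ZMod 2, ∑ u : ι → ZMod 2, ∑ y : ι → 𝒴,
      (if C c ∧ φ u y ≠ c then a * ∏ i, p (c i + u i) (y i) else 0)
      = a * ∑ c ∈ univ.filter C, ∑ x, decodingErrorMass p φ c x := by
  simp only [ite_and, sum_ite_irrel, sum_const_zero]
  rw [← sum_filter, mul_sum]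
  refine sum_congr rfl fun c _ => ?_
  rw [← Equiv.sum_comp (Equiv.addLeft c), mul_sum]
  refine sum_congr rfl fun x _ => ?_
  simp only [decodingErrorMass, mul_sum, mul_ite, mul_zero, Equiv.coe_addLeft, Pi.add_apply,
    ← add_assoc, ZModModule.add_self, zero_add]

theorem sum_slepianWolfError_eq (M : Matrix ι ι (ZMod 2)) (x : ι → ZMod 2) (a : ℝ) :
    ∑ v : ι → ZMod 2, ∑ y : ι → 𝒴,
      (if φ (M *ᵥ x + v + M *ᵥ v) y + (M *ᵥ x + v + M *ᵥ v) ≠ x then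
        (∏ i, p (x i) (y i)) * a else 0)
      = (∑ w, decodingErrorMass p φ ((1 + M) *ᵥ w) x) * a := by
  rw [← Equiv.sum_comp (Equiv.addLeft x), sum_mul]
  refine sum_congr rfl fun w _ => ?_
  have hZ : M *ᵥ x + (x + w) + M *ᵥ (x + w) = (1 + M) *ᵥ w + x := by
    rw [mulVec_add, add_mulVec, one_mulVec]
    linear_combination ZModModule.add_self (M *ᵥ x)
  have hcond : ∀ z, z + ((1 + M) *ᵥ w + x) = x ↔ z = (1 + M) *ᵥ w := fun z => by
    rw [← add_assoc, add_eq_right, ← ZModModule.sub_eq_add, sub_eq_zero]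
  simp only [decodingErrorMass, Equiv.coe_addLeft, hZ, ne_eq, hcond, sum_mul, ite_mul, zero_mul]

end Decoding

namespace Htilde

variable {k l : ℕ} (H : Matrix (Fin l) (Fin k ⊕ Fin l) (ZMod 2))
  (Binv : Matrix (Fin l) (Fin l) (ZMod 2))

theorem eq_fromRows : Htilde H Binv = fromRows 0 (Binv * H) := by
  ext (i | i) j <;> rfl

theorem mul_eq_self (hB : H.submatrix id Sum.inr * Binv = 1) : H * Htilde H Binv = H := by
  replace hB : H.toCols₂ * Binv = 1 := hB
  nth_rw 1 [eq_fromRows, ← fromCols_toCols H]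
  rw [fromCols_mul_fromRows, Matrix.mul_zero, zero_add, ← Matrix.mul_assoc, hB, Matrix.one_mul]

theorem mulVec_eq_zero {c : Fin k ⊕ Fin l → ZMod 2} (hc : H *ᵥ c = 0) :
    Htilde H Binv *ᵥ c = 0 := by
  rw [eq_fromRows, fromRows_mulVec, ← mulVec_mulVec, hc]
  simp

theorem image_one_add_mulVec (hB : H.submatrix id Sum.inr * Binv = 1) :
    univ.image (fun w => (1 + Htilde H Binv) *ᵥ w) = univ.filter (fun c => H *ᵥ c = 0) := by
  ext c
  simp only [mem_image, mem_filter, mem_univ, true_and]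
  constructor
  · rintro ⟨w, rfl⟩
    rw [mulVec_mulVec, Matrix.mul_add, Matrix.mul_one, mul_eq_self H Binv hB,
      ZModModule.add_self, zero_mulVec]
  · intro hc
    exact ⟨c, by rw [add_mulVec, one_mulVec, mulVec_eq_zero H Binv hc, add_zero]⟩

end Htilde

theorem stmt5_general (k l : ℕ)
    (H : Matrix (Fin l) (Fin k ⊕ Fin l) (ZMod 2))
    (Binv : Matrix (Fin l) (Fin l) (ZMod 2))
    (hB : H.submatrix id Sum.inr * Binv = 1)
    (𝒴 : Type) [Fintype 𝒴]
    (p : ZMod 2 → 𝒴 → ℝ)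
    (φ : ((Fin k ⊕ Fin l) → ZMod 2) → ((Fin k ⊕ Fin l) → 𝒴) →
          ((Fin k ⊕ Fin l) → ZMod 2))
    (ε : ℝ)
    (hε : ∑ c : (Fin k ⊕ Fin l) → ZMod 2, ∑ u : (Fin k ⊕ Fin l) → ZMod 2,
        ∑ y : (Fin k ⊕ Fin l) → 𝒴,
        (if H.mulVec c = 0 ∧ φ u y ≠ c then
          ((1 : ℝ) / ((Finset.univ.filter
              (fun c' : (Fin k ⊕ Fin l) → ZMod 2 => H.mulVec c' = 0)).card : ℝ)) *
            ∏ i, p (c i + u i) (y i)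
        else 0) = ε) :
    ∑ x : (Fin k ⊕ Fin l) → ZMod 2, ∑ v : (Fin k ⊕ Fin l) → ZMod 2,
      ∑ y : (Fin k ⊕ Fin l) → 𝒴,
      (if φ ((Htilde H Binv).mulVec x + v + (Htilde H Binv).mulVec v) y
            + ((Htilde H Binv).mulVec x + v + (Htilde H Binv).mulVec v) ≠ x then
        (∏ i, p (x i) (y i)) * ((1 : ℝ) / 2 ^ (k + l))
      else 0) = ε := by
  classical
  set P := (mulVecLin (1 + Htilde H Binv)).toAddMonoidHom
  have hP : ∀ w, P w = (1 + Htilde H Binv) *ᵥ w := fun _ => rfl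
  have hC : univ.image P = univ.filter (fun c => H *ᵥ c = 0) :=
    Htilde.image_one_add_mulVec H Binv hB
  have hcard : (2 : ℝ) ^ (k + l) = Nat.card P.ker * #(univ.image P) := by
    have := P.card_eq_card_ker_mul_card_image
    simp only [Fintype.card_fun, ZMod.card, Fintype.card_sum, Fintype.card_fin] at this
    exact_mod_cast this
  have hK : (Nat.card P.ker : ℝ) ≠ 0 := Nat.cast_ne_zero.2 Nat.card_pos.ne'
  rw [← hε, sum_channelError_eq, ← hC]
  simp only [sum_slepianWolfError_eq]
  rw [← sum_mul, sum_comm]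
  simp only [← hP]
  rw [P.sum_comp_eq_card_ker_nsmul (fun c => ∑ x, decodingErrorMass p φ c x), hcard,
    nsmul_eq_mul, mul_one_div, mul_div_mul_left _ _ hK, one_div_mul_eq_div]

/-- **Slepian–Wolf from a point-to-point code.**  Let `(Xⁿ,Yⁿ)` be i.i.d.
with law `p(x,y)` and `Vⁿ` i.i.d. uniform on `F₂` independent of `(Xⁿ,Yⁿ)`.
With `Zⁿ = H̃Xⁿ ⊕ Vⁿ ⊕ H̃Vⁿ` and `X̂ⁿ = φ(Zⁿ,Yⁿ) ⊕ Zⁿ`, the error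
probability `P{X̂ⁿ ≠ Xⁿ}` equals `ε`, the error probability of the
point-to-point code `φ` over the symmetrized channel: `ε` is the probability
that `φ(Ũⁿ,Ỹⁿ) ≠ C̃ⁿ` where `C̃ⁿ` is uniform on the codebook and,
given `C̃ⁿ = cⁿ`, the pairs `(Ũᵢ,Ỹᵢ)` are independent with
`P{Ũᵢ = u, Ỹᵢ = y} = p(cᵢ ⊕ u, y)`. -/
theorem stmt5 (k l : ℕ) (hl : 0 < l)
    (H : Matrix (Fin l) (Fin k ⊕ Fin l) (ZMod 2))
    (Binv : Matrix (Fin l) (Fin l) (ZMod 2))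
    (hB : H.submatrix id Sum.inr * Binv = 1)
    (hB' : Binv * H.submatrix id Sum.inr = 1)
    (𝒴 : Type) [Fintype 𝒴]
    (p : ZMod 2 → 𝒴 → ℝ) (hp0 : ∀ x y, 0 ≤ p x y)
    (hp1 : ∑ x : ZMod 2, ∑ y : 𝒴, p x y = 1)
    (φ : ((Fin k ⊕ Fin l) → ZMod 2) → ((Fin k ⊕ Fin l) → 𝒴) →
          ((Fin k ⊕ Fin l) → ZMod 2))
    (ε : ℝ)
    (hε : ∑ c : (Fin k ⊕ Fin l) → ZMod 2, ∑ u : (Fin k ⊕ Fin l) → ZMod 2,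
        ∑ y : (Fin k ⊕ Fin l) → 𝒴,
        (if H.mulVec c = 0 ∧ φ u y ≠ c then
          ((1 : ℝ) / ((Finset.univ.filter
              (fun c' : (Fin k ⊕ Fin l) → ZMod 2 => H.mulVec c' = 0)).card : ℝ)) *
            ∏ i, p (c i + u i) (y i)
        else 0) = ε) :
    ∑ x : (Fin k ⊕ Fin l) → ZMod 2, ∑ v : (Fin k ⊕ Fin l) → ZMod 2,
      ∑ y : (Fin k ⊕ Fin l) → 𝒴,
      (if φ ((Htilde H Binv).mulVec x + v + (Htilde H Binv).mulVec v) y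
            + ((Htilde H Binv).mulVec x + v + (Htilde H Binv).mulVec v) ≠ x then
        (∏ i, p (x i) (y i)) * ((1 : ℝ) / 2 ^ (k + l))
      else 0) = ε :=
  stmt5_general k l H Binv hB 𝒴 p φ ε hε
end

section
/- Let Cⁿ be uniform on the codebook C and Vⁿ i.i.d. uniform on F₂, independent of Cⁿ; set Xⁿ = Cⁿ ⊕ Vⁿ and, conditionally on Xⁿ, let Y₁,…,Yₙ be independent with Yᵢ distributed according to p(·|Xᵢ). Define Ĉⁿ = ψ(pad(HVⁿ), Yⁿ) ⊕ Vⁿ. Then P{Ĉⁿ ≠ Cⁿ} = ε. (A point-to-point channel code built from a Slepian–Wolf code by dithering has average error probability exactly equal to that of the Slepian–Wolf code.) -/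
/-! Substituting `x = c + v` for the dither turns the error event `ψ(pad(Hv), y) + v ≠ c` into
`ψ(pad(Hx), y) ≠ x`, since `Hv = Hx` for a codeword `c` and addition over `F₂` is its own
inverse. As `v` ranges over `F₂ⁿ` so does `x`, with channel weight `∏ p(yᵢ|xᵢ)`, so every
codeword sees exactly the Slepian–Wolf error probability, and averaging over codewords keeps it. -/

/-- `pad w` is the vector of `F₂ⁿ` whose first `k` entries are `0` and whose
last `n − k` entries are `w`; coordinates are indexed by `Fin k ⊕ Fin l`
(so `n = k + l`). -/
def pad {k l : ℕ} (w : Fin l → ZMod 2) : (Fin k ⊕ Fin l) → ZMod 2 :=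
  Sum.elim (fun _ => 0) w

open Finset Matrix

section Dithering

variable {R ι m 𝒴 : Type*} [Ring R] [CharP R 2] [Fintype R] [DecidableEq R]
  [Fintype ι] [DecidableEq ι] [Fintype 𝒴]

theorem sum_dithered_error_eq (H : Matrix m ι R) (φ : (m → R) → (ι → 𝒴) → ι → R)
    (W : (ι → R) → (ι → 𝒴) → ℝ) {c : ι → R} (hc : H *ᵥ c = 0) :
    ∑ v, ∑ y, (if φ (H *ᵥ v) y + v ≠ c then W (c + v) y else 0) =
      ∑ x, ∑ y, (if φ (H *ᵥ x) y ≠ x then W x y else 0) := by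
  refine Fintype.sum_equiv (Equiv.addLeft c) _ _ fun v => ?_
  have hsyndrome : H *ᵥ (c + v) = H *ᵥ v := by rw [mulVec_add, hc, zero_add]
  have hcancel : ∀ a : ι → R, a + v = c ↔ a = c + v := by
    simp only [funext_iff, Pi.add_apply, CharTwo.add_eq_iff_eq_add, implies_true]
  simp only [Equiv.coe_addLeft, hsyndrome, ne_eq, hcancel]

end Dithering

theorem stmt6_general (k l : ℕ)
    (H : Matrix (Fin l) (Fin k ⊕ Fin l) (ZMod 2))
    (𝒴 : Type) [Fintype 𝒴]
    (ch : ZMod 2 → 𝒴 → ℝ)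
    (ψ : ((Fin k ⊕ Fin l) → ZMod 2) → ((Fin k ⊕ Fin l) → 𝒴) →
          ((Fin k ⊕ Fin l) → ZMod 2))
    (ε : ℝ)
    (hε : ∑ x : (Fin k ⊕ Fin l) → ZMod 2, ∑ y : (Fin k ⊕ Fin l) → 𝒴,
        (if ψ (pad (H.mulVec x)) y ≠ x then
          ∏ i, ((1 : ℝ) / 2) * ch (x i) (y i)
        else 0) = ε) :
    ∑ c : (Fin k ⊕ Fin l) → ZMod 2, ∑ v : (Fin k ⊕ Fin l) → ZMod 2,
      ∑ y : (Fin k ⊕ Fin l) → 𝒴,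
      (if H.mulVec c = 0 ∧ ψ (pad (H.mulVec v)) y + v ≠ c then
        ((1 : ℝ) / ((Finset.univ.filter
            (fun c' : (Fin k ⊕ Fin l) → ZMod 2 => H.mulVec c' = 0)).card : ℝ)) *
          ((1 : ℝ) / 2 ^ (k + l)) * ∏ i, ch ((c + v) i) (y i)
      else 0) = ε := by
  set K : ℝ := ((univ.filter fun c => H *ᵥ c = 0).card : ℝ)
  have hK : K ≠ 0 := Nat.cast_ne_zero.mpr (card_ne_zero.mpr ⟨0, by simp⟩)
  have hSW : ε = 1 / 2 ^ (k + l) * ∑ x, ∑ y,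
      (if ψ (pad (H *ᵥ x)) y ≠ x then ∏ i, ch (x i) (y i) else 0) := by
    simp only [← hε, prod_mul_distrib, prod_const, card_univ, Fintype.card_sum,
      Fintype.card_fin, _root_.one_div_pow, mul_sum, mul_ite, mul_zero]
  have hcodeword : ∀ c, (∑ v, ∑ y, if H *ᵥ c = 0 ∧ ψ (pad (H *ᵥ v)) y + v ≠ c then
      1 / K * (1 / 2 ^ (k + l)) * ∏ i, ch ((c + v) i) (y i) else 0) =
      if H *ᵥ c = 0 then ε / K else 0 := by
    intro c
    split_ifs with hc
    · simp only [hc, true_and, ← mul_ite_zero, ← mul_sum]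
      rw [sum_dithered_error_eq H (fun s => ψ (pad s)) (fun x y => ∏ i, ch (x i) (y i)) hc, hSW]
      ring
    · simp [hc]
  rw [sum_congr rfl fun c _ => hcodeword c, ← sum_filter, sum_const, nsmul_eq_mul]
  exact mul_div_cancel₀ ε hK

/-- **Point-to-point code from a Slepian–Wolf code.**  Let `Cⁿ` be uniform on
the codebook `C = {c : Hc = 0}` and `Vⁿ` i.i.d. uniform on `F₂` independent of
`Cⁿ`; set `Xⁿ = Cⁿ ⊕ Vⁿ` and, given `Xⁿ`, let `Yᵢ` be independent with law
`p(·|Xᵢ)`.  With `Ĉⁿ = ψ(pad(HVⁿ), Yⁿ) ⊕ Vⁿ`, the error probability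
`P{Ĉⁿ ≠ Cⁿ}` equals `ε`, the error probability of the Slepian–Wolf code:
for `(X̃ⁿ,Ỹⁿ)` i.i.d. with `P{X̃ᵢ=x, Ỹᵢ=y} = (1/2)p(y|x)`,
`ε = P{ψ(pad(HX̃ⁿ), Ỹⁿ) ≠ X̃ⁿ}`. -/
theorem stmt6 (k l : ℕ) (hl : 0 < l)
    (H : Matrix (Fin l) (Fin k ⊕ Fin l) (ZMod 2))
    (𝒴 : Type) [Fintype 𝒴]
    (ch : ZMod 2 → 𝒴 → ℝ) (hch0 : ∀ x y, 0 ≤ ch x y)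
    (hch1 : ∀ x, ∑ y : 𝒴, ch x y = 1)
    (ψ : ((Fin k ⊕ Fin l) → ZMod 2) → ((Fin k ⊕ Fin l) → 𝒴) →
          ((Fin k ⊕ Fin l) → ZMod 2))
    (ε : ℝ)
    (hε : ∑ x : (Fin k ⊕ Fin l) → ZMod 2, ∑ y : (Fin k ⊕ Fin l) → 𝒴,
        (if ψ (pad (H.mulVec x)) y ≠ x then
          ∏ i, ((1 : ℝ) / 2) * ch (x i) (y i)
        else 0) = ε) :
    ∑ c : (Fin k ⊕ Fin l) → ZMod 2, ∑ v : (Fin k ⊕ Fin l) → ZMod 2,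
      ∑ y : (Fin k ⊕ Fin l) → 𝒴,
      (if H.mulVec c = 0 ∧ ψ (pad (H.mulVec v)) y + v ≠ c then
        ((1 : ℝ) / ((Finset.univ.filter
            (fun c' : (Fin k ⊕ Fin l) → ZMod 2 => H.mulVec c' = 0)).card : ℝ)) *
          ((1 : ℝ) / 2 ^ (k + l)) * ∏ i, ch ((c + v) i) (y i)
      else 0) = ε :=
  stmt6_general k l H 𝒴 ch ψ ε hε
end

section
/- Let D ∈ (0,1/2) and let φ: F₂ⁿ → F₂ⁿ have shaping distance at most δ with respect to BSC(D). Then for Xⁿ i.i.d. uniform on F₂, the normalized expected distortion satisfies (1/n)·E[d_H(Xⁿ, φ(Xⁿ))] ≤ D + δ. (Distortion guarantee of the lossy source coding scheme for a symmetric Bernoulli(1/2) source.) -/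
/-!
The joint law `q` of `(φ(Yⁿ), Yⁿ)` and the BSC law `p` both have total mass one, and the Hamming
distance takes values in `[0, n]`, so `E_q[d_H] ≤ E_p[d_H] + n · TV(p, q) ≤ n D + n δ`. Under `p`
the distance is binomial: `x ↦ {i | xᵢ ≠ yᵢ}` identifies `F₂ⁿ` with the subsets of the
coordinates, and the mean `n D` is the first moment of the Bernstein polynomials.
-/

open Finset

theorem Fintype.sum_pow_mul_one_sub_pow_mul_card {ι R : Type*} [Fintype ι] [CommRing R] (a : R) :
    ∑ s : Finset ι, a ^ #s * (1 - a) ^ (Fintype.card ι - #s) * #s = Fintype.card ι * a := by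
  have h := congrArg (Polynomial.eval a) (bernsteinPolynomial.sum_smul R (Fintype.card ι))
  simp only [Polynomial.eval_finsetSum, bernsteinPolynomial,
    Polynomial.eval_mul, Polynomial.eval_pow, Polynomial.eval_sub, Polynomial.eval_one,
    Polynomial.eval_X, Polynomial.eval_natCast, nsmul_eq_mul] at h
  rw [← h, ← powerset_univ,
    sum_powerset_apply_card fun k => a ^ k * (1 - a) ^ (Fintype.card ι - k) * k]
  simp only [card_univ, nsmul_eq_mul]
  exact Finset.sum_congr rfl fun k _ => by ring

theorem ZMod.two_eq_of_ne_iff_ne {a b c : ZMod 2} (h : a ≠ c ↔ b ≠ c) : a = b := by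
  revert a b c; decide

theorem sum_comp_hammingDist_zmod_two {ι M : Type*} [Fintype ι] [DecidableEq ι] [AddCommMonoid M]
    (y : ι → ZMod 2) (f : ℕ → M) :
    ∑ x : ι → ZMod 2, f (hammingDist x y) = ∑ s : Finset ι, f #s := by
  have hinj : Function.Injective fun x : ι → ZMod 2 => ({i | x i ≠ y i} : Finset ι) := by
    intro x x' h
    funext i
    exact ZMod.two_eq_of_ne_iff_ne (by simpa using congrArg (i ∈ ·) h)
  have hbij := (Fintype.bijective_iff_injective_and_card _).2 ⟨hinj, by simp⟩
  exact Fintype.sum_bijective _ hbij _ _ fun x => rfl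

theorem sum_mul_le_sum_mul_add_of_sum_eq {α : Type*} [Fintype α] {p q f : α → ℝ} {M : ℝ}
    (hpq : ∑ a, p a = ∑ a, q a) (hf₀ : ∀ a, 0 ≤ f a) (hfM : ∀ a, f a ≤ M) :
    ∑ a, q a * f a ≤ ∑ a, p a * f a + M * ((1 / 2) * ∑ a, |q a - p a|) := by
  -- `(q - p) f ≤ M (q - p)⁺ = M/2 ((q - p) + |q - p|)`, and the `q - p` terms sum to zero
  have hpt : ∀ a, (q a - p a) * f a ≤ M / 2 * ((q a - p a) + |q a - p a|) := by
    intro a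
    have := hf₀ a; have := hfM a
    rcases abs_cases (q a - p a) with ⟨h, _⟩ | ⟨h, _⟩ <;> nlinarith
  have hsum := sum_le_sum fun a (_ : a ∈ univ) => hpt a
  rw [← mul_sum, sum_add_distrib, sum_sub_distrib, hpq, sub_self, zero_add] at hsum
  simp only [sub_mul, sum_sub_distrib] at hsum
  linarith

theorem sum_pow_mul_one_sub_pow_hammingDist {R : Type*} [CommRing R] (n : ℕ) (D : R)
    (y : Fin n → ZMod 2) :
    ∑ x : Fin n → ZMod 2, D ^ hammingDist x y * (1 - D) ^ (n - hammingDist x y) = 1 := by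
  rw [sum_comp_hammingDist_zmod_two y fun k => D ^ k * (1 - D) ^ (n - k),
    Fin.sum_pow_mul_eq_add_pow, add_sub_cancel, one_pow]

theorem sum_pow_mul_one_sub_pow_hammingDist_mul {R : Type*} [CommRing R] (n : ℕ) (D : R)
    (y : Fin n → ZMod 2) :
    ∑ x : Fin n → ZMod 2, D ^ hammingDist x y * (1 - D) ^ (n - hammingDist x y) * hammingDist x y
      = n * D := by
  rw [sum_comp_hammingDist_zmod_two y fun k => D ^ k * (1 - D) ^ (n - k) * k]
  simpa using Fintype.sum_pow_mul_one_sub_pow_mul_card (ι := Fin n) D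

theorem stmt7_general (n : ℕ) (hn : 0 < n) (D δ : ℝ)
    (φ : (Fin n → ZMod 2) → (Fin n → ZMod 2))
    (hδ : (1 / 2) * ∑ x : Fin n → ZMod 2, ∑ y : Fin n → ZMod 2,
        |(if φ y = x then (1 : ℝ) / 2 ^ n else 0)
          - ((1 : ℝ) / 2 ^ n) * D ^ (hammingDist x y)
              * (1 - D) ^ (n - hammingDist x y)| ≤ δ) :
    (1 / (n : ℝ)) * ∑ x : Fin n → ZMod 2,
        ((1 : ℝ) / 2 ^ n) * (hammingDist x (φ x) : ℝ) ≤ D + δ := by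
  have hq : ∑ x, ∑ y, (if φ y = x then (1 : ℝ) / 2 ^ n else 0) = 1 := by
    rw [sum_comm]; simp
  have hp : ∑ x : Fin n → ZMod 2, ∑ y : Fin n → ZMod 2,
      (1 : ℝ) / 2 ^ n * D ^ hammingDist x y * (1 - D) ^ (n - hammingDist x y) = 1 := by
    rw [sum_comm]
    simp_rw [mul_assoc, ← mul_sum, sum_pow_mul_one_sub_pow_hammingDist]
    simp
  have hpd : ∑ x : Fin n → ZMod 2, ∑ y : Fin n → ZMod 2,
      (1 : ℝ) / 2 ^ n * D ^ hammingDist x y * (1 - D) ^ (n - hammingDist x y)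
        * hammingDist x y = n * D := by
    rw [sum_comm]
    simp_rw [mul_assoc, ← mul_sum, ← mul_assoc, sum_pow_mul_one_sub_pow_hammingDist_mul]
    simp
  have hqd : ∑ x, ∑ y, (if φ y = x then (1 : ℝ) / 2 ^ n else 0) * hammingDist x y
      = ∑ x, (1 : ℝ) / 2 ^ n * hammingDist x (φ x) := by
    rw [sum_comm]; simp [hammingDist_comm]
  have key := sum_mul_le_sum_mul_add_of_sum_eq (α := (Fin n → ZMod 2) × (Fin n → ZMod 2))
    (p := fun z =>
      (1 : ℝ) / 2 ^ n * D ^ hammingDist z.1 z.2 * (1 - D) ^ (n - hammingDist z.1 z.2))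
    (q := fun z => if φ z.2 = z.1 then (1 : ℝ) / 2 ^ n else 0)
    (f := fun z => (hammingDist z.1 z.2 : ℝ)) (M := n)
    (by rw [Fintype.sum_prod_type, Fintype.sum_prod_type]; exact hp.trans hq.symm)
    (fun _ => by positivity)
    (fun z => by exact_mod_cast hammingDist_le_card_fintype.trans_eq (Fintype.card_fin n))
  rw [Fintype.sum_prod_type, Fintype.sum_prod_type, Fintype.sum_prod_type] at key
  rw [hqd, hpd] at key
  have hn' : (0 : ℝ) < n := by exact_mod_cast hn
  calc (1 / (n : ℝ)) * ∑ x, (1 : ℝ) / 2 ^ n * hammingDist x (φ x)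
      ≤ 1 / n * (n * D + n * δ) := by gcongr; nlinarith
    _ = D + δ := by field_simp

/-- **Lossy source coding of a symmetric source.**  Let `D ∈ (0,1/2)` and let
`φ : F₂ⁿ → F₂ⁿ` have shaping distance at most `δ` with respect to `BSC(D)`:
the total variation distance between the joint law of `(φ(Yⁿ), Yⁿ)` for `Yⁿ`
i.i.d. uniform and the i.i.d. `2^{−n} D^{d_H}(1−D)^{n−d_H}` distribution is at
most `δ`.  Then for `Xⁿ` i.i.d. uniform on `F₂`,
`(1/n)·E[d_H(Xⁿ, φ(Xⁿ))] ≤ D + δ`. -/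
theorem stmt7 (n : ℕ) (hn : 0 < n) (D δ : ℝ) (hD : D ∈ Set.Ioo (0 : ℝ) (1 / 2))
    (φ : (Fin n → ZMod 2) → (Fin n → ZMod 2))
    (hδ : (1 / 2) * ∑ x : Fin n → ZMod 2, ∑ y : Fin n → ZMod 2,
        |(if φ y = x then (1 : ℝ) / 2 ^ n else 0)
          - ((1 : ℝ) / 2 ^ n) * D ^ (hammingDist x y)
              * (1 - D) ^ (n - hammingDist x y)| ≤ δ) :
    (1 / (n : ℝ)) * ∑ x : Fin n → ZMod 2,
        ((1 : ℝ) / 2 ^ n) * (hammingDist x (φ x) : ℝ) ≤ D + δ :=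
  stmt7_general n hn D δ φ hδ
end

section
/- Let p(x̃,ỹ) be a pmf on F₂×𝒴 (𝒴 finite) and let φ: 𝒴ⁿ × F₂ⁿ → F₂ⁿ be a decoder for the symmetrized channel p̄ with shaping distance at most δ. Let Ỹⁿ be i.i.d. with law p(ỹ) (the 𝒴-marginal of p), let Ṽⁿ be i.i.d. uniform on F₂ independent of Ỹⁿ, and set Ũⁿ = φ(Ỹⁿ,Ṽⁿ) ⊕ Ṽⁿ. Then (1/2)·∑_{ũⁿ,ỹⁿ} |P{Ũⁿ = ũⁿ, Ỹⁿ = ỹⁿ} − ∏_{i=1}^{n} p(ũᵢ, ỹᵢ)| ≤ δ. (Lemma 3.) -/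
/-!
Substituting `x = u - v` turns the shaping distance into `∑_{u,y} ∑_v |P(u,y,v) - Q(u,y,v)|`,
where `∑_v P(u,y,v)` is the probability that `φ(Y,V) + V = u, Y = y` and, because the target
`|G|⁻¹ π(x + v, y)` only depends on `x + v = u`, `∑_v Q(u,y,v) = π(u,y)`. Taking the marginal
over `v` can only decrease the `ℓ¹` distance.
-/

open Finset

lemma sum_sum_sum_comp_sub_right {G Y M : Type*} [AddGroup G] [Fintype G] [Fintype Y]
    [AddCommMonoid M] (f : G → Y → G → M) :
    ∑ u, ∑ y, ∑ v, f (u - v) y v = ∑ x, ∑ y, ∑ v, f x y v := by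
  rw [sum_comm]
  conv_rhs => rw [sum_comm]
  refine sum_congr rfl fun y _ => ?_
  rw [sum_comm]
  conv_rhs => rw [sum_comm]
  exact sum_congr rfl fun v _ => Equiv.sum_comp (Equiv.subRight v) (f · y v)

lemma sum_sum_abs_sum_sub_sum_le {U Y V : Type*} [Fintype U] [Fintype Y] [Fintype V]
    (P Q : U → Y → V → ℝ) :
    ∑ u, ∑ y, |∑ v, P u y v - ∑ v, Q u y v| ≤ ∑ u, ∑ y, ∑ v, |P u y v - Q u y v| := by
  gcongr with u _ y _
  rw [← sum_sub_distrib]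
  exact abs_sum_le_sum_abs _ _

lemma sum_abs_law_decoder_add_sub_le {G Y : Type*} [AddGroup G] [Fintype G] [DecidableEq G]
    [Fintype Y] (φ : Y → G → G) (w : Y → ℝ) (π : G → Y → ℝ) :
    ∑ u, ∑ y, |(∑ v, if φ y v + v = u then w y else 0) - π u y|
      ≤ ∑ x, ∑ y, ∑ v,
          |(if φ y v = x then w y else 0) - (Fintype.card G : ℝ)⁻¹ * π (x + v) y| := by
  have hmean : ∀ a : ℝ, ∑ _v : G, (Fintype.card G : ℝ)⁻¹ * a = a := fun a => by
    rw [sum_const, card_univ, nsmul_eq_mul, ← mul_assoc,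
      mul_inv_cancel₀ (Nat.cast_ne_zero.mpr Fintype.card_ne_zero), one_mul]
  calc ∑ u, ∑ y, |(∑ v, if φ y v + v = u then w y else 0) - π u y|
      = ∑ u, ∑ y, |(∑ v, if φ y v = u - v then w y else 0)
          - ∑ v, (Fintype.card G : ℝ)⁻¹ * π (u - v + v) y| := by
        simp only [eq_sub_iff_add_eq, sub_add_cancel, hmean]
    _ ≤ ∑ u, ∑ y, ∑ v, |(if φ y v = u - v then w y else 0)
          - (Fintype.card G : ℝ)⁻¹ * π (u - v + v) y| := sum_sum_abs_sum_sub_sum_le _ _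
    _ = _ := sum_sum_sum_comp_sub_right
          fun x y v => |(if φ y v = x then w y else 0) - (Fintype.card G : ℝ)⁻¹ * π (x + v) y|

theorem stmt8_general (n : ℕ) (𝒴 : Type) [Fintype 𝒴] (δ : ℝ)
    (p : ZMod 2 → 𝒴 → ℝ)
    (φ : (Fin n → 𝒴) → (Fin n → ZMod 2) → (Fin n → ZMod 2))
    (hδ : (1 / 2) * ∑ x : Fin n → ZMod 2, ∑ y : Fin n → 𝒴, ∑ v : Fin n → ZMod 2,
        |(if φ y v = x then
            ∏ i, (∑ x' : ZMod 2, p x' (y i)) * ((1 : ℝ) / 2)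
          else 0)
          - ((1 : ℝ) / 2 ^ n) * ∏ i, p (x i + v i) (y i)| ≤ δ) :
    (1 / 2) * ∑ u : Fin n → ZMod 2, ∑ y : Fin n → 𝒴,
      |(∑ v : Fin n → ZMod 2,
          if φ y v + v = u then
            ∏ i, (∑ x' : ZMod 2, p x' (y i)) * ((1 : ℝ) / 2)
          else 0)
        - ∏ i, p (u i) (y i)| ≤ δ := by
  have hcard : (Fintype.card (Fin n → ZMod 2) : ℝ)⁻¹ = 1 / 2 ^ n := by simp
  have h := sum_abs_law_decoder_add_sub_le φ (fun y => ∏ i, (∑ x', p x' (y i)) * ((1 : ℝ) / 2))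
    (fun u y => ∏ i, p (u i) (y i))
  rw [hcard] at h
  exact (mul_le_mul_of_nonneg_left h (by norm_num)).trans hδ

/-- **Lemma 3.**  Let `p(x̃,ỹ)` be a pmf on `F₂ × 𝒴` and let
`φ : 𝒴ⁿ × F₂ⁿ → F₂ⁿ` be a decoder for the symmetrized channel
`p̄(ỹ,ṽ|x̃) = p(x̃⊕ṽ, ỹ)` with shaping distance at most `δ`: the total
variation distance between the law of `(φ(Ỹⁿ,Ṽⁿ), Ỹⁿ, Ṽⁿ)` — where `Ỹⁿ` is
i.i.d. with the `𝒴`-marginal of `p` and `Ṽⁿ` is i.i.d. uniform on `F₂`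
independent of `Ỹⁿ` — and `2^{−n} ∏ᵢ p̄(ỹᵢ,ṽᵢ|x̃ᵢ)` is at most `δ`.
Then with `Ũⁿ = φ(Ỹⁿ,Ṽⁿ) ⊕ Ṽⁿ`,
`(1/2)·∑_{ũⁿ,ỹⁿ} |P{Ũⁿ = ũⁿ, Ỹⁿ = ỹⁿ} − ∏ᵢ p(ũᵢ,ỹᵢ)| ≤ δ`. -/
theorem stmt8 (n : ℕ) (𝒴 : Type) [Fintype 𝒴] (δ : ℝ)
    (p : ZMod 2 → 𝒴 → ℝ) (hp0 : ∀ x y, 0 ≤ p x y)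
    (hp1 : ∑ x : ZMod 2, ∑ y : 𝒴, p x y = 1)
    (φ : (Fin n → 𝒴) → (Fin n → ZMod 2) → (Fin n → ZMod 2))
    (hδ : (1 / 2) * ∑ x : Fin n → ZMod 2, ∑ y : Fin n → 𝒴, ∑ v : Fin n → ZMod 2,
        |(if φ y v = x then
            ∏ i, (∑ x' : ZMod 2, p x' (y i)) * ((1 : ℝ) / 2)
          else 0)
          - ((1 : ℝ) / 2 ^ n) * ∏ i, p (x i + v i) (y i)| ≤ δ) :
    (1 / 2) * ∑ u : Fin n → ZMod 2, ∑ y : Fin n → 𝒴,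
      |(∑ v : Fin n → ZMod 2,
          if φ y v + v = u then
            ∏ i, (∑ x' : ZMod 2, p x' (y i)) * ((1 : ℝ) / 2)
          else 0)
        - ∏ i, p (u i) (y i)| ≤ δ :=
  stmt8_general n 𝒴 δ p φ hδ
end

section
/- Let Xⁿ be i.i.d. Bern(θ) and Vⁿ i.i.d. uniform on F₂, independent of Xⁿ. Define Uⁿ = φ₁(Xⁿ,Vⁿ) ⊕ Vⁿ and X̂ⁿ = φ₂(pad₂(H₁Vⁿ, QUⁿ)). Then the total variation distance between the joint law of (Xⁿ, X̂ⁿ) and the i.i.d. product ∏_{i=1}^{n} p(xᵢ, x̂ᵢ) is at most δ + ε. (Lemma 4: the lossy source coding scheme for an asymmetric source produces a source–reconstruction pair within δ+ε of the target i.i.d. joint distribution.) -/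
/-- The Bernoulli pmf on `F₂`: `bern r x = r^x (1−r)^{1−x}`. -/
noncomputable def bern (r : ℝ) (x : ZMod 2) : ℝ :=
  r ^ x.val * (1 - r) ^ (1 - x.val)

/-- The target source–reconstruction joint pmf
`p(x,x̂) = α^{x̂}(1−α)^{1−x̂} D^{x⊕x̂}(1−D)^{1−x⊕x̂}` on `F₂²`. -/
noncomputable def targetP (α D : ℝ) (x xh : ZMod 2) : ℝ :=
  bern α xh * bern D (x + xh)

/-- `pad₂ w m` is the vector of `F₂ⁿ` whose first `k₂` entries are `0`,
followed by `w ∈ F₂^{n−k₁}` and then `m ∈ F₂^{k₁−k₂}`.  Coordinates are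
indexed by `Fin a ⊕ Fin b ⊕ Fin c` with `a = k₂`, `b = n−k₁`, `c = k₁−k₂`
(so `n = a+b+c`, `k₁ = a+c`, `k₂ = a`). -/
def pad₂ {a b c : ℕ} (w : Fin b → ZMod 2) (m : Fin c → ZMod 2) :
    (Fin a ⊕ Fin b ⊕ Fin c) → ZMod 2 :=
  Sum.elim (fun _ => 0) (Sum.elim w m)

/-!
Since `φ₁` takes values in `ker H₁`, the syndrome `H₁ V` equals `H₁ U` for `U = φ₁(X,V) + V`,
so `X̂ = g(U)` with `g u = φ₂(pad₂(H₁ u, Q u))`. Replacing the law of `(φ₁(X,V), X, V)` by the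
ideal one `2⁻ⁿ p(x, u + v)` costs at most `δ`, since total variation does not grow under the
map `(u, x, v) ↦ (x, g(u + v))`. Under the ideal law `(X, U)` has law `p` exactly, so
`U ~ Bern(α)ⁿ`, and replacing `g(U)` by `U` costs at most `P{g(U) ≠ U} ≤ ε`.
-/

open Finset

section Pushforward

variable {α β : Type*} [Fintype α] [Fintype β] [DecidableEq β]

def pushforward (f : α → β) (p : α → ℝ) (b : β) : ℝ :=
  ∑ a, if f a = b then p a else 0

lemma pushforward_id (p : β → ℝ) : pushforward id p = p := by
  ext b
  simp [pushforward]

lemma sum_pushforward (f : α → β) (p : α → ℝ) : ∑ b, pushforward f p b = ∑ a, p a := by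
  simp only [pushforward]
  rw [sum_comm]
  simp

lemma sum_abs_pushforward_sub_le (f : α → β) (p q : α → ℝ) :
    ∑ b, |pushforward f p b - pushforward f q b| ≤ ∑ a, |p a - q a| := by
  rw [← sum_pushforward f fun a => |p a - q a|]
  refine sum_le_sum fun b _ => ?_
  simp only [pushforward, ← sum_sub_distrib]
  refine (abs_sum_le_sum_abs _ _).trans_eq (sum_congr rfl fun a _ => ?_)
  split_ifs <;> simp

lemma sum_abs_pushforward_sub_pushforward_le (f g : α → β) {p : α → ℝ} (hp : 0 ≤ p) :
    ∑ b, |pushforward f p b - pushforward g p b| ≤ 2 * ∑ a, if f a ≠ g a then p a else 0 := by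
  calc ∑ b, |pushforward f p b - pushforward g p b|
      ≤ ∑ b, ∑ a, if f a ≠ g a then
          (if f a = b then p a else 0) + (if g a = b then p a else 0) else 0 := by
        refine sum_le_sum fun b _ => ?_
        simp only [pushforward, ← sum_sub_distrib]
        refine (abs_sum_le_sum_abs _ _).trans (sum_le_sum fun a _ => ?_)
        have := hp a
        by_cases hfg : f a = g a
        · simp [hfg]
        · split_ifs <;> simp_all [abs_of_nonneg]
    _ = 2 * ∑ a, if f a ≠ g a then p a else 0 := by
        rw [sum_comm, mul_sum]
        refine sum_congr rfl fun a _ => ?_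
        split_ifs <;> simp [sum_add_distrib]; ring

end Pushforward

section Dithering

variable {G : Type*} [AddGroup G] [Fintype G] [DecidableEq G]

lemma pushforward_graph_add (φ g : G → G) (c : ℝ) (w : G) :
    pushforward (fun uv : G × G => g (uv.1 + uv.2)) (fun uv => if φ uv.2 = uv.1 then c else 0) w
      = ∑ v, if g (φ v + v) = w then c else 0 := by
  simp only [pushforward, Fintype.sum_prod_type]
  rw [sum_comm]
  refine sum_congr rfl fun v _ => ?_
  rw [Fintype.sum_eq_single (φ v) fun u hu => by simp [Ne.symm hu]]
  simp

/-- A uniform dither `v` added to `u` disappears after the change of variables `u ↦ u + v`. -/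
lemma pushforward_add_div_card (g : G → G) (t : G → ℝ) :
    pushforward (fun uv : G × G => g (uv.1 + uv.2)) (fun uv => t (uv.1 + uv.2) / Fintype.card G)
      = pushforward g t := by
  ext w
  simp only [pushforward, Fintype.sum_prod_type]
  rw [sum_comm]
  have hshift : ∀ v : G, (∑ u, if g (u + v) = w then t (u + v) / Fintype.card G else 0)
      = pushforward g t w / Fintype.card G := fun v => by
    rw [pushforward, sum_div]
    simp_rw [ite_div, zero_div]
    exact Equiv.sum_comp (Equiv.addRight v) fun u => if g u = w then t u / Fintype.card G else 0
  simp only [hshift, sum_const, card_univ, nsmul_eq_mul]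
  field_simp
  rfl

lemma sum_abs_dithered_decode_sub_le (φ g : G → G) (c : ℝ) {t : G → ℝ} (ht : 0 ≤ t) :
    ∑ w, |(∑ v, if g (φ v + v) = w then c else 0) - t w|
      ≤ ∑ u, ∑ v, |(if φ v = u then c else 0) - t (u + v) / Fintype.card G|
        + 2 * ∑ w, if g w ≠ w then t w else 0 := by
  set f : G × G → G := fun uv => g (uv.1 + uv.2)
  set L : G × G → ℝ := fun uv => if φ uv.2 = uv.1 then c else 0
  set R : G × G → ℝ := fun uv => t (uv.1 + uv.2) / Fintype.card G
  have hshaping := sum_abs_pushforward_sub_le f L R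
  have hdecoding := sum_abs_pushforward_sub_pushforward_le g id ht
  rw [pushforward_add_div_card, Fintype.sum_prod_type] at hshaping
  rw [pushforward_id] at hdecoding
  calc ∑ w, |(∑ v, if g (φ v + v) = w then c else 0) - t w|
      ≤ ∑ w, (|pushforward f L w - pushforward g t w| + |pushforward g t w - t w|) := by
        refine sum_le_sum fun w _ => ?_
        rw [pushforward_graph_add]
        exact abs_sub_le _ _ _
    _ ≤ _ := by
        rw [sum_add_distrib]
        exact add_le_add hshaping hdecoding

end Dithering

lemma bern_nonneg {r : ℝ} (hr : r ∈ Set.Icc 0 1) (x : ZMod 2) : 0 ≤ bern r x :=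
  mul_nonneg (pow_nonneg hr.1 _) (pow_nonneg (sub_nonneg.2 hr.2) _)

lemma sum_bern (r : ℝ) : ∑ s : ZMod 2, bern r s = 1 := by
  rw [show (univ : Finset (ZMod 2)) = {0, 1} by decide, sum_pair (by decide)]
  simp [bern, ZMod.val_one]

lemma sum_targetP (α D : ℝ) (w : ZMod 2) : ∑ s : ZMod 2, targetP α D s w = bern α w := by
  simp only [targetP, ← mul_sum]
  rw [show ∑ s, bern D (s + w) = ∑ s, bern D s from Equiv.sum_comp (Equiv.addRight w) (bern D),
    sum_bern, mul_one]

lemma sub_div_one_sub_two_mul_mem_Icc {θ D : ℝ} (hDθ : D ≤ θ) (hθ : θ < 1 / 2) :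
    (θ - D) / (1 - 2 * D) ∈ Set.Icc 0 1 :=
  ⟨div_nonneg (by linarith) (by linarith), (div_le_one (by linarith)).2 (by linarith)⟩

section Product

variable {ι : Type*} [Fintype ι]

lemma prod_targetP_nonneg {α D : ℝ} (hα : α ∈ Set.Icc 0 1) (hD : D ∈ Set.Icc 0 1)
    (x w : ι → ZMod 2) : 0 ≤ ∏ i, targetP α D (x i) (w i) :=
  prod_nonneg fun _ _ => mul_nonneg (bern_nonneg hα _) (bern_nonneg hD _)

lemma sum_prod_targetP [DecidableEq ι] (α D : ℝ) (w : ι → ZMod 2) :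
    ∑ x : ι → ZMod 2, ∏ i, targetP α D (x i) (w i) = ∏ i, bern α (w i) := by
  rw [← Fintype.prod_sum fun i s => targetP α D s (w i)]
  exact prod_congr rfl fun i _ => sum_targetP α D (w i)

lemma prod_half_mul_targetP [DecidableEq ι] (α D : ℝ) (x w : ι → ZMod 2) :
    ∏ i, (1 / 2 : ℝ) * targetP α D (x i) (w i)
      = (∏ i, targetP α D (x i) (w i)) / Fintype.card (ι → ZMod 2) := by
  rw [prod_mul_distrib, prod_const, card_univ, Fintype.card_fun, ZMod.card]
  push_cast
  rw [one_div_pow, one_div_mul_eq_div]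

end Product

theorem stmt9_general (a b c : ℕ)
    (θ D α δ ε : ℝ) (hθ : θ ∈ Set.Ioo (0 : ℝ) (1 / 2)) (hD : D ∈ Set.Ioo 0 θ)
    (hα : α = (θ - D) / (1 - 2 * D))
    (H₁ : Matrix (Fin b) (Fin a ⊕ Fin b ⊕ Fin c) (ZMod 2))
    (Q : Matrix (Fin c) (Fin a ⊕ Fin b ⊕ Fin c) (ZMod 2))
    (φ₁ : ((Fin a ⊕ Fin b ⊕ Fin c) → ZMod 2) →
          ((Fin a ⊕ Fin b ⊕ Fin c) → ZMod 2) →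
          ((Fin a ⊕ Fin b ⊕ Fin c) → ZMod 2))
    (hφ₁C : ∀ x v, H₁.mulVec (φ₁ x v) = 0)
    (hδ : (1 / 2) * ∑ u : (Fin a ⊕ Fin b ⊕ Fin c) → ZMod 2,
        ∑ x : (Fin a ⊕ Fin b ⊕ Fin c) → ZMod 2,
        ∑ v : (Fin a ⊕ Fin b ⊕ Fin c) → ZMod 2,
        |(if φ₁ x v = u then
            (∏ i, bern θ (x i)) * ((1 : ℝ) / 2 ^ (a + b + c))
          else 0)
          - ∏ i, ((1 : ℝ) / 2) * targetP α D (x i) (u i + v i)| ≤ δ)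
    (φ₂ : ((Fin a ⊕ Fin b ⊕ Fin c) → ZMod 2) →
          ((Fin a ⊕ Fin b ⊕ Fin c) → ZMod 2))
    (hε : ∑ u : (Fin a ⊕ Fin b ⊕ Fin c) → ZMod 2,
        (if φ₂ (pad₂ (H₁.mulVec u) (Q.mulVec u)) ≠ u then
          ∏ i, bern α (u i)
        else 0) ≤ ε) :
    (1 / 2) * ∑ x : (Fin a ⊕ Fin b ⊕ Fin c) → ZMod 2,
      ∑ xh : (Fin a ⊕ Fin b ⊕ Fin c) → ZMod 2,
      |(∑ v : (Fin a ⊕ Fin b ⊕ Fin c) → ZMod 2,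
          if φ₂ (pad₂ (H₁.mulVec v) (Q.mulVec (φ₁ x v + v))) = xh then
            (∏ i, bern θ (x i)) * ((1 : ℝ) / 2 ^ (a + b + c))
          else 0)
        - ∏ i, targetP α D (x i) (xh i)| ≤ δ + ε := by
  have hαI : α ∈ Set.Icc 0 1 := hα ▸ sub_div_one_sub_two_mul_mem_Icc hD.2.le hθ.2
  have hDI : D ∈ Set.Icc 0 1 := ⟨hD.1.le, by linarith [hD.2, hθ.2]⟩
  set g : ((Fin a ⊕ Fin b ⊕ Fin c) → ZMod 2) → ((Fin a ⊕ Fin b ⊕ Fin c) → ZMod 2) :=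
    fun w => φ₂ (pad₂ (H₁.mulVec w) (Q.mulVec w))
  have hsyndrome : ∀ x v,
      φ₂ (pad₂ (H₁.mulVec v) (Q.mulVec (φ₁ x v + v))) = g (φ₁ x v + v) := fun x v => by
    have hcoset : H₁.mulVec (φ₁ x v + v) = H₁.mulVec v := by
      rw [Matrix.mulVec_add, hφ₁C, zero_add]
    simp only [g, hcoset]
  have hdecoding : ∑ x : (Fin a ⊕ Fin b ⊕ Fin c) → ZMod 2,
      ∑ w, (if g w ≠ w then ∏ i, targetP α D (x i) (w i) else 0) ≤ ε := by
    rw [sum_comm]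
    simpa only [sum_ite_irrel, sum_const_zero, sum_prod_targetP] using hε
  simp only [prod_half_mul_targetP] at hδ
  rw [sum_comm] at hδ
  have hx := fun x => sum_abs_dithered_decode_sub_le (φ₁ x) g
    ((∏ i, bern θ (x i)) * ((1 : ℝ) / 2 ^ (a + b + c)))
    (prod_targetP_nonneg hαI hDI x)
  simp only [← hsyndrome, Pi.add_apply] at hx
  have htotal := sum_le_sum fun x (_ : x ∈ univ) => hx x
  rw [sum_add_distrib, ← mul_sum] at htotal
  linarith

/-- **Lemma 4.**  Lossy source coding of an asymmetric `Bern(θ)` source from a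
point-to-point channel code `φ₁` (with codebook `C₁ = ker H₁` and shaping
distance ≤ `δ` for the symmetrized channel `p̄(x,v|x̂) = p(x, x̂⊕v)`) and a
lossless source code `φ₂` (with error probability ≤ `ε` on a `Bern(α)`
source).  With `Xⁿ` i.i.d. `Bern(θ)`, `Vⁿ` i.i.d. uniform independent of
`Xⁿ`, `Uⁿ = φ₁(Xⁿ,Vⁿ) ⊕ Vⁿ`, and `X̂ⁿ = φ₂(pad₂(H₁Vⁿ, QUⁿ))`, the total
variation distance between the joint law of `(Xⁿ, X̂ⁿ)` and the i.i.d.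
product `∏ᵢ p(xᵢ, x̂ᵢ)` is at most `δ + ε`. -/
theorem stmt9 (a b c : ℕ) (hb : 0 < b) (hc : 0 < c)
    (θ D α δ ε : ℝ) (hθ : θ ∈ Set.Ioo (0 : ℝ) (1 / 2)) (hD : D ∈ Set.Ioo 0 θ)
    (hα : α = (θ - D) / (1 - 2 * D))
    (H₁ : Matrix (Fin b) (Fin a ⊕ Fin b ⊕ Fin c) (ZMod 2))
    (Q : Matrix (Fin c) (Fin a ⊕ Fin b ⊕ Fin c) (ZMod 2))
    (φ₁ : ((Fin a ⊕ Fin b ⊕ Fin c) → ZMod 2) →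
          ((Fin a ⊕ Fin b ⊕ Fin c) → ZMod 2) →
          ((Fin a ⊕ Fin b ⊕ Fin c) → ZMod 2))
    (hφ₁C : ∀ x v, H₁.mulVec (φ₁ x v) = 0)
    (hδ : (1 / 2) * ∑ u : (Fin a ⊕ Fin b ⊕ Fin c) → ZMod 2,
        ∑ x : (Fin a ⊕ Fin b ⊕ Fin c) → ZMod 2,
        ∑ v : (Fin a ⊕ Fin b ⊕ Fin c) → ZMod 2,
        |(if φ₁ x v = u then
            (∏ i, bern θ (x i)) * ((1 : ℝ) / 2 ^ (a + b + c))
          else 0)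
          - ∏ i, ((1 : ℝ) / 2) * targetP α D (x i) (u i + v i)| ≤ δ)
    (φ₂ : ((Fin a ⊕ Fin b ⊕ Fin c) → ZMod 2) →
          ((Fin a ⊕ Fin b ⊕ Fin c) → ZMod 2))
    (hε : ∑ u : (Fin a ⊕ Fin b ⊕ Fin c) → ZMod 2,
        (if φ₂ (pad₂ (H₁.mulVec u) (Q.mulVec u)) ≠ u then
          ∏ i, bern α (u i)
        else 0) ≤ ε) :
    (1 / 2) * ∑ x : (Fin a ⊕ Fin b ⊕ Fin c) → ZMod 2,
      ∑ xh : (Fin a ⊕ Fin b ⊕ Fin c) → ZMod 2,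
      |(∑ v : (Fin a ⊕ Fin b ⊕ Fin c) → ZMod 2,
          if φ₂ (pad₂ (H₁.mulVec v) (Q.mulVec (φ₁ x v + v))) = xh then
            (∏ i, bern θ (x i)) * ((1 : ℝ) / 2 ^ (a + b + c))
          else 0)
        - ∏ i, targetP α D (x i) (xh i)| ≤ δ + ε :=
  stmt9_general a b c θ D α δ ε hθ hD hα H₁ Q φ₁ hφ₁C hδ φ₂ hε
end

section
/- Let (Xⁿ,Yⁿ) be i.i.d. with law p(x,y) and Vⁿ i.i.d. uniform on F₂, independent of (Xⁿ,Yⁿ). Define Uⁿ = φ₁(Xⁿ,Vⁿ) ⊕ Vⁿ and X̂ⁿ = ψ₂(pad₂(H₁Vⁿ, QUⁿ), Yⁿ). Then the normalized expected Hamming distortion satisfies (1/n)·E[d_H(Xⁿ, X̂ⁿ)] ≤ D + δ + ε. (Distortion guarantee of the Wyner–Ziv coding scheme built from a point-to-point channel code and a Slepian–Wolf code.) -/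
open Finset

section
variable {ι : Type*} [Fintype ι]

lemma sum_pi_prod_eq_one [DecidableEq ι] {α : Type*} [Fintype α] {q : α → ℝ} (hq : ∑ a, q a = 1) :
    ∑ x : ι → α, ∏ i, q (x i) = 1 := by
  rw [← Fintype.prod_sum (fun _ => q), hq, prod_const_one]

lemma sum_pi_sum_pi_prod [DecidableEq ι] {α β : Type*} [Fintype α] [Fintype β] (g : ι → α → β → ℝ) :
    ∑ x : ι → α, ∑ w : ι → β, ∏ i, g i (x i) (w i) = ∏ i, ∑ a, ∑ b, g i a b := by
  simp only [Fintype.prod_sum]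

lemma sum_pi_prod_mul_hammingDist [DecidableEq ι] {α : Type*} [Fintype α] [DecidableEq α]
    (r : α → α → ℝ) (hr : ∑ a, ∑ b, r a b = 1) :
    ∑ x : ι → α, ∑ w : ι → α, (∏ i, r (x i) (w i)) * hammingDist x w
      = Fintype.card ι * ∑ a, ∑ b, if b ≠ a then r a b else 0 := by
  have hcoord (j : ι) : ∑ x : ι → α, ∑ w : ι → α, (∏ i, r (x i) (w i)) * (if x j ≠ w j then 1 else 0)
      = ∑ a, ∑ b, if b ≠ a then r a b else 0 := by
    set g : ι → α → α → ℝ := fun i a b => if i = j then (if b ≠ a then r a b else 0) else r a b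
    have hfactor (x w : ι → α) :
        (∏ i, r (x i) (w i)) * (if x j ≠ w j then 1 else 0) = ∏ i, g i (x i) (w i) := by
      rw [← mul_prod_erase univ _ (mem_univ j), ← mul_prod_erase univ _ (mem_univ j),
        prod_congr rfl fun i hi => if_neg (ne_of_mem_erase hi)]
      simp only [g, if_true, ne_comm]
      split_ifs <;> ring
    simp_rw [hfactor, sum_pi_sum_pi_prod, g]
    rw [prod_eq_single j (fun i _ hij => by simp [hij, hr]) (by simp)]
    simp
  conv_lhs => simp only [hammingDist, card_filter, Nat.cast_sum, Nat.cast_ite, Nat.cast_one,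
    Nat.cast_zero, mul_sum]
  rw [sum_congr rfl fun x _ => sum_comm, sum_comm, sum_congr rfl fun j _ => hcoord j, sum_const,
    card_univ, nsmul_eq_mul]

/-- Change of measure from `m g₁` to `m g₂` (equal masses) for an `f` with `0 ≤ f ≤ M m`, stated
without dividing by `m`. -/
lemma sum_mul_le_sum_mul_add_abs_sub {α : Type*} [Fintype α] {m g₁ g₂ f : α → ℝ} {M : ℝ}
    (hm : ∀ a, 0 ≤ m a) (hf0 : ∀ a, 0 ≤ f a) (hfM : ∀ a, f a ≤ M * m a)
    (hmass : ∑ a, m a * g₁ a = ∑ a, m a * g₂ a) :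
    ∑ a, g₁ a * f a ≤ ∑ a, g₂ a * f a + M / 2 * ∑ a, |m a * g₁ a - m a * g₂ a| := by
  have hpoint (a : α) : (g₁ a - g₂ a) * f a
      ≤ M / 2 * |m a * g₁ a - m a * g₂ a| + M / 2 * (m a * g₁ a - m a * g₂ a) := by
    rw [← mul_sub, abs_mul, abs_of_nonneg (hm a)]
    rcases le_total 0 (g₁ a - g₂ a) with hd | hd
    · rw [abs_of_nonneg hd]; nlinarith [mul_le_mul_of_nonneg_left (hfM a) hd]
    · rw [abs_of_nonpos hd]; nlinarith [mul_nonpos_of_nonpos_of_nonneg hd (hf0 a)]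
  have hsum := sum_le_sum fun a (_ : a ∈ univ) => hpoint a
  rw [sum_add_distrib, ← mul_sum, ← mul_sum, sum_sub_distrib, hmass, sub_self, mul_zero,
    add_zero] at hsum
  simp only [sub_mul, sum_sub_distrib] at hsum
  linarith

lemma sum_sum_add {G M : Type*} [AddGroup G] [Fintype G] [AddCommMonoid M] (f : G → M) :
    ∑ u, ∑ v, f (u + v) = Fintype.card G • ∑ w, f w := by
  simp [fun u => Fintype.sum_equiv (Equiv.addLeft u) (fun v => f (u + v)) f (fun _ => rfl)]

lemma sum_sum_prod_half_mul_add [DecidableEq ι] (c : ι → ZMod 2 → ℝ) (G : (ι → ZMod 2) → ℝ) :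
    ∑ u : ι → ZMod 2, ∑ v : ι → ZMod 2, (∏ i, (1 : ℝ) / 2 * c i (u i + v i)) * G (u + v)
      = ∑ w, (∏ i, c i (w i)) * G w := by
  have hhalf (w : ι → ZMod 2) :
      ∏ i, (1 : ℝ) / 2 * c i (w i) = (1 / 2) ^ Fintype.card ι * ∏ i, c i (w i) := by
    rw [prod_mul_distrib, prod_const, card_univ]
  refine (sum_sum_add fun w : ι → ZMod 2 => (∏ i, (1 : ℝ) / 2 * c i (w i)) * G w).trans ?_
  rw [nsmul_eq_mul, mul_sum]
  refine sum_congr rfl fun w _ => ?_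
  rw [hhalf, Fintype.card_fun, ZMod.card, Nat.cast_pow, ← mul_assoc, ← mul_assoc, ← mul_pow]
  norm_num

section CappedDistortion
variable {α 𝒴 : Type*} [DecidableEq α] (Ψ : (ι → α) → (ι → 𝒴) → ι → α)

def cappedDistortion (x w : ι → α) (y : ι → 𝒴) : ℝ :=
  if Ψ w y = w then hammingDist x w else Fintype.card ι

variable {Ψ}

lemma hammingDist_le_cappedDistortion (x w : ι → α) (y : ι → 𝒴) :
    (hammingDist x (Ψ w y) : ℝ) ≤ cappedDistortion Ψ x w y := by
  unfold cappedDistortion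
  split_ifs with h
  · rw [h]
  · exact_mod_cast hammingDist_le_card_fintype

lemma cappedDistortion_nonneg (x w : ι → α) (y : ι → 𝒴) : 0 ≤ cappedDistortion Ψ x w y := by
  unfold cappedDistortion; split_ifs <;> positivity

lemma cappedDistortion_le_card (x w : ι → α) (y : ι → 𝒴) :
    cappedDistortion Ψ x w y ≤ Fintype.card ι := by
  unfold cappedDistortion
  split_ifs
  · exact_mod_cast hammingDist_le_card_fintype
  · rfl

lemma cappedDistortion_le_add (x w : ι → α) (y : ι → 𝒴) :
    cappedDistortion Ψ x w y ≤ hammingDist x w + if Ψ w y ≠ w then (Fintype.card ι : ℝ) else 0 := by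
  unfold cappedDistortion
  split_ifs <;> simp

end CappedDistortion

section WynerZiv
variable [DecidableEq ι] {𝒴 : Type*} [Fintype 𝒴] {p : ZMod 2 → 𝒴 → ℝ} {W : ZMod 2 → ZMod 2 → ℝ}
  {Ψ : (ι → ZMod 2) → (ι → 𝒴) → ι → ZMod 2}

variable (p Ψ) in
/-- `p_Xⁿ(x)` times the mean capped distortion given the source word `x`: integrating the side
information out first lets the change of measure act on `(u, x, v)` alone. -/
def avgCappedDistortion (x w : ι → ZMod 2) : ℝ :=
  ∑ y, (∏ i, p (x i) (y i)) * cappedDistortion Ψ x w y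

lemma avgCappedDistortion_nonneg (hp0 : ∀ x y, 0 ≤ p x y) (x w : ι → ZMod 2) :
    0 ≤ avgCappedDistortion p Ψ x w :=
  sum_nonneg fun y _ =>
    mul_nonneg (prod_nonneg fun _ _ => hp0 _ _) (cappedDistortion_nonneg x w y)

lemma avgCappedDistortion_le (hp0 : ∀ x y, 0 ≤ p x y) (x w : ι → ZMod 2) :
    avgCappedDistortion p Ψ x w ≤ Fintype.card ι * ∏ i, ∑ y, p (x i) y := by
  rw [Fintype.prod_sum, mul_sum]
  refine sum_le_sum fun y _ => ?_
  rw [mul_comm]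
  exact mul_le_mul_of_nonneg_right (cappedDistortion_le_card x w y)
    (prod_nonneg fun _ _ => hp0 _ _)

lemma sum_hammingDist_le_sum_codeword (hp0 : ∀ x y, 0 ≤ p x y)
    (φ₁ : (ι → ZMod 2) → (ι → ZMod 2) → ι → ZMod 2) :
    ∑ x : ι → ZMod 2, ∑ y : ι → 𝒴, ∑ v : ι → ZMod 2,
      (∏ i, p (x i) (y i)) * ((1 : ℝ) / 2 ^ Fintype.card ι) * (hammingDist x (Ψ (φ₁ x v + v) y) : ℝ)
      ≤ ∑ u, ∑ x, ∑ v, (if φ₁ x v = u then (1 : ℝ) / 2 ^ Fintype.card ι else 0)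
          * avgCappedDistortion p Ψ x (u + v) := by
  have hcodeword (x v : ι → ZMod 2) :
      ∑ u, (if φ₁ x v = u then (1 : ℝ) / 2 ^ Fintype.card ι else 0)
          * avgCappedDistortion p Ψ x (u + v)
        = ∑ y, (∏ i, p (x i) (y i)) * ((1 : ℝ) / 2 ^ Fintype.card ι)
          * cappedDistortion Ψ x (φ₁ x v + v) y := by
    simp only [ite_mul, zero_mul, sum_ite_eq, mem_univ, if_true]
    rw [avgCappedDistortion, mul_sum]
    exact sum_congr rfl fun y _ => by ring
  calc _ ≤ ∑ x : ι → ZMod 2, ∑ y : ι → 𝒴, ∑ v : ι → ZMod 2,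
        (∏ i, p (x i) (y i)) * ((1 : ℝ) / 2 ^ Fintype.card ι)
          * cappedDistortion Ψ x (φ₁ x v + v) y := by
        gcongr with x _ y _ v _
        · exact mul_nonneg (prod_nonneg fun _ _ => hp0 _ _) (by positivity)
        · exact hammingDist_le_cappedDistortion x _ y
    _ = ∑ x, ∑ v, ∑ u, (if φ₁ x v = u then (1 : ℝ) / 2 ^ Fintype.card ι else 0)
          * avgCappedDistortion p Ψ x (u + v) := by
        simp_rw [hcodeword]
        exact sum_congr rfl fun x _ => sum_comm
    _ = _ := (sum_congr rfl fun x _ => sum_comm).trans sum_comm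

lemma sum_testChannel_mul_hammingDist_le (hp1 : ∑ x, ∑ y, p x y = 1)
    (hW1 : ∀ x, ∑ xh, W x xh = 1) {D : ℝ}
    (hdist : ∑ x, ∑ xh, (if xh ≠ x then (∑ y, p x y) * W x xh else 0) ≤ D) :
    ∑ x : ι → ZMod 2, ∑ w : ι → ZMod 2, ∑ y : ι → 𝒴,
      (∏ i, p (x i) (y i) * W (x i) (w i)) * hammingDist x w ≤ Fintype.card ι * D := by
  have hmarginal (x w : ι → ZMod 2) : ∑ y : ι → 𝒴, ∏ i, p (x i) (y i) * W (x i) (w i)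
      = ∏ i, (∑ y, p (x i) y) * W (x i) (w i) := by
    simp only [sum_mul, Fintype.prod_sum]
  have hpmf : ∑ a, ∑ b, (∑ y, p a y) * W a b = 1 := by
    simp only [← mul_sum, hW1, mul_one, hp1]
  simp only [← sum_mul, hmarginal, sum_pi_prod_mul_hammingDist _ hpmf]
  gcongr

lemma sum_testChannel_mul_decodingError_le {ε : ℝ}
    (hε : ∑ w : ι → ZMod 2, ∑ y : ι → 𝒴,
      (if Ψ w y ≠ w then ∏ i, ∑ x, p x (y i) * W x (w i) else 0) ≤ ε) :
    ∑ x : ι → ZMod 2, ∑ w : ι → ZMod 2, ∑ y : ι → 𝒴,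
      (∏ i, p (x i) (y i) * W (x i) (w i)) * (if Ψ w y ≠ w then (Fintype.card ι : ℝ) else 0)
      ≤ Fintype.card ι * ε := by
  have hterm (w : ι → ZMod 2) (y : ι → 𝒴) :
      ∑ x : ι → ZMod 2, (∏ i, p (x i) (y i) * W (x i) (w i))
          * (if Ψ w y ≠ w then (Fintype.card ι : ℝ) else 0)
        = Fintype.card ι * (if Ψ w y ≠ w then ∏ i, ∑ x, p x (y i) * W x (w i) else 0) := by
    rw [← sum_mul, Fintype.prod_sum]
    split_ifs <;> ring
  rw [sum_comm, sum_congr rfl fun w _ => sum_comm]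
  simp only [hterm, ← mul_sum]
  gcongr

lemma sum_ideal_mul_avgCappedDistortion_le (hp0 : ∀ x y, 0 ≤ p x y) (hp1 : ∑ x, ∑ y, p x y = 1)
    (hW0 : ∀ x xh, 0 ≤ W x xh) (hW1 : ∀ x, ∑ xh, W x xh = 1) {D ε : ℝ}
    (hdist : ∑ x, ∑ xh, (if xh ≠ x then (∑ y, p x y) * W x xh else 0) ≤ D)
    (hε : ∑ w : ι → ZMod 2, ∑ y : ι → 𝒴,
      (if Ψ w y ≠ w then ∏ i, ∑ x, p x (y i) * W x (w i) else 0) ≤ ε) :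
    ∑ u : ι → ZMod 2, ∑ x : ι → ZMod 2, ∑ v : ι → ZMod 2,
      (∏ i, (1 : ℝ) / 2 * W (x i) (u i + v i)) * avgCappedDistortion p Ψ x (u + v)
      ≤ Fintype.card ι * (D + ε) := by
  have htestChannel (x : ι → ZMod 2) :
      ∑ u : ι → ZMod 2, ∑ v : ι → ZMod 2,
        (∏ i, (1 : ℝ) / 2 * W (x i) (u i + v i)) * avgCappedDistortion p Ψ x (u + v)
        = ∑ w : ι → ZMod 2, ∑ y : ι → 𝒴,
          (∏ i, p (x i) (y i) * W (x i) (w i)) * cappedDistortion Ψ x w y := by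
    rw [sum_sum_prod_half_mul_add (fun i => W (x i)) (avgCappedDistortion p Ψ x)]
    refine sum_congr rfl fun w _ => ?_
    rw [avgCappedDistortion, mul_sum]
    refine sum_congr rfl fun y _ => ?_
    rw [prod_mul_distrib]
    ring
  rw [sum_comm, sum_congr rfl fun x _ => htestChannel x]
  calc _ ≤ ∑ x : ι → ZMod 2, ∑ w : ι → ZMod 2, ∑ y : ι → 𝒴, (∏ i, p (x i) (y i) * W (x i) (w i))
        * (hammingDist x w + if Ψ w y ≠ w then (Fintype.card ι : ℝ) else 0) := by
        gcongr with x _ w _ y _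
        · exact prod_nonneg fun _ _ => mul_nonneg (hp0 _ _) (hW0 _ _)
        · exact cappedDistortion_le_add x w y
    _ ≤ Fintype.card ι * D + Fintype.card ι * ε := by
        simp only [mul_add, sum_add_distrib]
        exact add_le_add (sum_testChannel_mul_hammingDist_le hp1 hW1 hdist)
          (sum_testChannel_mul_decodingError_le hε)
    _ = Fintype.card ι * (D + ε) := by ring

lemma sum_codewordLaw_eq_one (hp1 : ∑ x, ∑ y, p x y = 1)
    (φ₁ : (ι → ZMod 2) → (ι → ZMod 2) → ι → ZMod 2) :
    ∑ u : ι → ZMod 2, ∑ x : ι → ZMod 2, ∑ v : ι → ZMod 2,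
      (∏ i, ∑ y, p (x i) y) * (if φ₁ x v = u then (1 : ℝ) / 2 ^ Fintype.card ι else 0) = 1 := by
  rw [sum_comm, sum_congr rfl fun x _ => sum_comm]
  simp only [mul_ite, mul_zero, sum_ite_eq, mem_univ, if_true, sum_const, card_univ,
    Fintype.card_fun, ZMod.card, nsmul_eq_mul, Nat.cast_pow, Nat.cast_ofNat]
  refine (sum_congr rfl fun x _ => ?_).trans (sum_pi_prod_eq_one hp1)
  field_simp

lemma sum_idealLaw_eq_one (hp1 : ∑ x, ∑ y, p x y = 1) (hW1 : ∀ x, ∑ xh, W x xh = 1) :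
    ∑ u : ι → ZMod 2, ∑ x : ι → ZMod 2, ∑ v : ι → ZMod 2,
      (∏ i, ∑ y, p (x i) y) * ∏ i, (1 : ℝ) / 2 * W (x i) (u i + v i) = 1 := by
  have hchannel (x : ι → ZMod 2) :
      ∑ u : ι → ZMod 2, ∑ v : ι → ZMod 2, ∏ i, (1 : ℝ) / 2 * W (x i) (u i + v i) = 1 := by
    have := sum_sum_prod_half_mul_add (fun i => W (x i)) fun _ => 1
    simp only [mul_one] at this
    rw [this, ← Fintype.prod_sum]
    simp [hW1]
  rw [sum_comm]
  simp only [← mul_sum, hchannel, mul_one]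
  exact sum_pi_prod_eq_one hp1

theorem sum_hammingDist_le_card_mul (hp0 : ∀ x y, 0 ≤ p x y) (hp1 : ∑ x, ∑ y, p x y = 1)
    (hW0 : ∀ x xh, 0 ≤ W x xh) (hW1 : ∀ x, ∑ xh, W x xh = 1) {D δ ε : ℝ}
    (hdist : ∑ x, ∑ xh, (if xh ≠ x then (∑ y, p x y) * W x xh else 0) ≤ D)
    (φ₁ : (ι → ZMod 2) → (ι → ZMod 2) → ι → ZMod 2)
    (hδ : (1 / 2) * ∑ u : ι → ZMod 2, ∑ x : ι → ZMod 2, ∑ v : ι → ZMod 2,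
        |(if φ₁ x v = u then (∏ i, ∑ y, p (x i) y) * ((1 : ℝ) / 2 ^ Fintype.card ι) else 0)
          - ∏ i, ((1 : ℝ) / 2) * (∑ y, p (x i) y) * W (x i) (u i + v i)| ≤ δ)
    (hε : ∑ w : ι → ZMod 2, ∑ y : ι → 𝒴,
      (if Ψ w y ≠ w then ∏ i, ∑ x, p x (y i) * W x (w i) else 0) ≤ ε) :
    ∑ x : ι → ZMod 2, ∑ y : ι → 𝒴, ∑ v : ι → ZMod 2,
      (∏ i, p (x i) (y i)) * ((1 : ℝ) / 2 ^ Fintype.card ι) * (hammingDist x (Ψ (φ₁ x v + v) y) : ℝ)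
      ≤ Fintype.card ι * (D + δ + ε) := by
  have hchange := sum_mul_le_sum_mul_add_abs_sub
    (m := fun t : (ι → ZMod 2) × (ι → ZMod 2) × (ι → ZMod 2) => ∏ i, ∑ y, p (t.2.1 i) y)
    (g₁ := fun t => if φ₁ t.2.1 t.2.2 = t.1 then (1 : ℝ) / 2 ^ Fintype.card ι else 0)
    (g₂ := fun t => ∏ i, (1 : ℝ) / 2 * W (t.2.1 i) (t.1 i + t.2.2 i))
    (f := fun t => avgCappedDistortion p Ψ t.2.1 (t.1 + t.2.2)) (M := Fintype.card ι)
    (fun _ => prod_nonneg fun _ _ => sum_nonneg fun _ _ => hp0 _ _)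
    (fun _ => avgCappedDistortion_nonneg hp0 _ _) (fun _ => avgCappedDistortion_le hp0 _ _)
    (by simp only [Fintype.sum_prod_type, sum_codewordLaw_eq_one hp1, sum_idealLaw_eq_one hp1 hW1])
  simp only [Fintype.sum_prod_type] at hchange
  have htv : ∑ u : ι → ZMod 2, ∑ x : ι → ZMod 2, ∑ v : ι → ZMod 2,
      |(∏ i, ∑ y, p (x i) y) * (if φ₁ x v = u then (1 : ℝ) / 2 ^ Fintype.card ι else 0)
        - (∏ i, ∑ y, p (x i) y) * ∏ i, (1 : ℝ) / 2 * W (x i) (u i + v i)| ≤ 2 * δ := by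
    simp only [mul_ite, mul_zero, ← prod_mul_distrib, ← mul_assoc, mul_comm _ ((1 : ℝ) / 2)]
    linarith
  calc _ ≤ _ := sum_hammingDist_le_sum_codeword hp0 φ₁
    _ ≤ _ := hchange
    _ ≤ Fintype.card ι * (D + ε) + Fintype.card ι / 2 * (2 * δ) := by
        gcongr
        exact sum_ideal_mul_avgCappedDistortion_le hp0 hp1 hW0 hW1 hdist hε
    _ = Fintype.card ι * (D + δ + ε) := by ring

end WynerZiv

end

theorem stmt11_general (a b c : ℕ) (hb : 0 < b)
    (𝒴 : Type) [Fintype 𝒴]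
    (p : ZMod 2 → 𝒴 → ℝ) (hp0 : ∀ x y, 0 ≤ p x y)
    (hp1 : ∑ x : ZMod 2, ∑ y : 𝒴, p x y = 1)
    (W : ZMod 2 → ZMod 2 → ℝ) (hW0 : ∀ x xh, 0 ≤ W x xh)
    (hW1 : ∀ x, ∑ xh : ZMod 2, W x xh = 1)
    (D δ ε : ℝ)
    (hdist : ∑ x : ZMod 2, ∑ xh : ZMod 2,
        (if xh ≠ x then (∑ y : 𝒴, p x y) * W x xh else 0) ≤ D)
    (H₁ : Matrix (Fin b) (Fin a ⊕ Fin b ⊕ Fin c) (ZMod 2))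
    (Q : Matrix (Fin c) (Fin a ⊕ Fin b ⊕ Fin c) (ZMod 2))
    (φ₁ : ((Fin a ⊕ Fin b ⊕ Fin c) → ZMod 2) →
          ((Fin a ⊕ Fin b ⊕ Fin c) → ZMod 2) →
          ((Fin a ⊕ Fin b ⊕ Fin c) → ZMod 2))
    (hφ₁C : ∀ x v, H₁.mulVec (φ₁ x v) = 0)
    (hδ : (1 / 2) * ∑ u : (Fin a ⊕ Fin b ⊕ Fin c) → ZMod 2,
        ∑ x : (Fin a ⊕ Fin b ⊕ Fin c) → ZMod 2,
        ∑ v : (Fin a ⊕ Fin b ⊕ Fin c) → ZMod 2,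
        |(if φ₁ x v = u then
            (∏ i, ∑ y : 𝒴, p (x i) y) * ((1 : ℝ) / 2 ^ (a + b + c))
          else 0)
          - ∏ i, ((1 : ℝ) / 2) * (∑ y : 𝒴, p (x i) y) * W (x i) (u i + v i)| ≤ δ)
    (ψ₂ : ((Fin a ⊕ Fin b ⊕ Fin c) → ZMod 2) →
          ((Fin a ⊕ Fin b ⊕ Fin c) → 𝒴) →
          ((Fin a ⊕ Fin b ⊕ Fin c) → ZMod 2))
    (hε : ∑ xh : (Fin a ⊕ Fin b ⊕ Fin c) → ZMod 2,
        ∑ y : (Fin a ⊕ Fin b ⊕ Fin c) → 𝒴,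
        (if ψ₂ (pad₂ (H₁.mulVec xh) (Q.mulVec xh)) y ≠ xh then
          ∏ i, (∑ x : ZMod 2, p x (y i) * W x (xh i))
        else 0) ≤ ε) :
    (1 / ((a + b + c : ℕ) : ℝ)) * ∑ x : (Fin a ⊕ Fin b ⊕ Fin c) → ZMod 2,
      ∑ y : (Fin a ⊕ Fin b ⊕ Fin c) → 𝒴,
      ∑ v : (Fin a ⊕ Fin b ⊕ Fin c) → ZMod 2,
      (∏ i, p (x i) (y i)) * ((1 : ℝ) / 2 ^ (a + b + c)) *
        (hammingDist x (ψ₂ (pad₂ (H₁.mulVec v) (Q.mulVec (φ₁ x v + v))) y) : ℝ)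
      ≤ D + δ + ε := by
  have hcard : Fintype.card (Fin a ⊕ Fin b ⊕ Fin c) = a + b + c := by
    simp only [Fintype.card_sum, Fintype.card_fin, add_assoc]
  have hn : (0 : ℝ) < (a + b + c : ℕ) := by exact_mod_cast (by omega : 0 < a + b + c)
  have hsyndrome (x v : (Fin a ⊕ Fin b ⊕ Fin c) → ZMod 2) :
      pad₂ (a := a) (H₁.mulVec v) (Q.mulVec (φ₁ x v + v))
        = pad₂ (H₁.mulVec (φ₁ x v + v)) (Q.mulVec (φ₁ x v + v)) := by
    rw [Matrix.mulVec_add H₁, hφ₁C, zero_add]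
  have hbound := sum_hammingDist_le_card_mul
    (Ψ := fun w y => ψ₂ (pad₂ (H₁.mulVec w) (Q.mulVec w)) y) (δ := δ) hp0 hp1 hW0 hW1 hdist φ₁ (by rwa [hcard]) hε
  rw [hcard] at hbound
  simp only [hsyndrome]
  rw [one_div_mul_eq_div, div_le_iff₀ hn, mul_comm]
  exact hbound

/-- **Wyner–Ziv coding scheme.**  Built from a point-to-point channel code
`φ₁` (values in `C₁ = ker H₁`, shaping distance ≤ `δ` with respect to the
symmetrized channel `p̄(x,v|x̂) = p_X(x)·W(x̂⊕v|x)`) and a Slepian–Wolf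
decoder `ψ₂` for the problem `p(x̂,y) = ∑ₓ p(x,y)W(x̂|x)` with error
probability ≤ `ε`.  With `(Xⁿ,Yⁿ)` i.i.d. `p(x,y)`, `Vⁿ` i.i.d. uniform
independent of `(Xⁿ,Yⁿ)`, `Uⁿ = φ₁(Xⁿ,Vⁿ) ⊕ Vⁿ` and
`X̂ⁿ = ψ₂(pad₂(H₁Vⁿ, QUⁿ), Yⁿ)`, the normalized expected Hamming distortion
satisfies `(1/n)·E[d_H(Xⁿ,X̂ⁿ)] ≤ D + δ + ε`. -/
theorem stmt11 (a b c : ℕ) (hb : 0 < b) (hc : 0 < c)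
    (𝒴 : Type) [Fintype 𝒴]
    (p : ZMod 2 → 𝒴 → ℝ) (hp0 : ∀ x y, 0 ≤ p x y)
    (hp1 : ∑ x : ZMod 2, ∑ y : 𝒴, p x y = 1)
    (W : ZMod 2 → ZMod 2 → ℝ) (hW0 : ∀ x xh, 0 ≤ W x xh)
    (hW1 : ∀ x, ∑ xh : ZMod 2, W x xh = 1)
    (D δ ε : ℝ)
    (hdist : ∑ x : ZMod 2, ∑ xh : ZMod 2,
        (if xh ≠ x then (∑ y : 𝒴, p x y) * W x xh else 0) ≤ D)
    (H₁ : Matrix (Fin b) (Fin a ⊕ Fin b ⊕ Fin c) (ZMod 2))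
    (Q : Matrix (Fin c) (Fin a ⊕ Fin b ⊕ Fin c) (ZMod 2))
    (φ₁ : ((Fin a ⊕ Fin b ⊕ Fin c) → ZMod 2) →
          ((Fin a ⊕ Fin b ⊕ Fin c) → ZMod 2) →
          ((Fin a ⊕ Fin b ⊕ Fin c) → ZMod 2))
    (hφ₁C : ∀ x v, H₁.mulVec (φ₁ x v) = 0)
    (hδ : (1 / 2) * ∑ u : (Fin a ⊕ Fin b ⊕ Fin c) → ZMod 2,
        ∑ x : (Fin a ⊕ Fin b ⊕ Fin c) → ZMod 2,
        ∑ v : (Fin a ⊕ Fin b ⊕ Fin c) → ZMod 2,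
        |(if φ₁ x v = u then
            (∏ i, ∑ y : 𝒴, p (x i) y) * ((1 : ℝ) / 2 ^ (a + b + c))
          else 0)
          - ∏ i, ((1 : ℝ) / 2) * (∑ y : 𝒴, p (x i) y) * W (x i) (u i + v i)| ≤ δ)
    (ψ₂ : ((Fin a ⊕ Fin b ⊕ Fin c) → ZMod 2) →
          ((Fin a ⊕ Fin b ⊕ Fin c) → 𝒴) →
          ((Fin a ⊕ Fin b ⊕ Fin c) → ZMod 2))
    (hε : ∑ xh : (Fin a ⊕ Fin b ⊕ Fin c) → ZMod 2,
        ∑ y : (Fin a ⊕ Fin b ⊕ Fin c) → 𝒴,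
        (if ψ₂ (pad₂ (H₁.mulVec xh) (Q.mulVec xh)) y ≠ xh then
          ∏ i, (∑ x : ZMod 2, p x (y i) * W x (xh i))
        else 0) ≤ ε) :
    (1 / ((a + b + c : ℕ) : ℝ)) * ∑ x : (Fin a ⊕ Fin b ⊕ Fin c) → ZMod 2,
      ∑ y : (Fin a ⊕ Fin b ⊕ Fin c) → 𝒴,
      ∑ v : (Fin a ⊕ Fin b ⊕ Fin c) → ZMod 2,
      (∏ i, p (x i) (y i)) * ((1 : ℝ) / 2 ^ (a + b + c)) *
        (hammingDist x (ψ₂ (pad₂ (H₁.mulVec v) (Q.mulVec (φ₁ x v + v))) y) : ℝ)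
      ≤ D + δ + ε :=
  stmt11_general a b c hb 𝒴 p hp0 hp1 W hW0 hW1 D δ ε hdist H₁ Q φ₁ hφ₁C hδ ψ₂ hε
end

section
/- Let M be uniform on F₂^{k₁−k₂}, V₁ uniform on F₂^{n−k₁}, V₂ⁿ i.i.d. uniform on F₂, and Sⁿ i.i.d. with law p(s), all mutually independent. Set Zⁿ = pad₂(B⁻¹·(V₁,M)) where (V₁,M) ∈ F₂^{n−k₂} is the concatenation of V₁ and M, set Uⁿ = Zⁿ ⊕ V₂ⁿ ⊕ H̃₂V₂ⁿ, and transmit Xⁿ = φ₂(Sⁿ, Uⁿ) ⊕ Uⁿ. Conditionally on (Xⁿ,Sⁿ), let Y₁,…,Yₙ be independent with Yᵢ distributed as p(·|Xᵢ,Sᵢ). Decode X̂ⁿ = φ₁(pad₁(V₁), Yⁿ) and M̂ = QX̂ⁿ. Then P{M̂ ≠ M} ≤ δ + ε. (Error guarantee of the Gelfand–Pinsker coding scheme built from a Slepian–Wolf code and a point-to-point channel code.) -/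
/- Coordinates of `F₂ⁿ` are indexed by `Fin a ⊕ (Fin c ⊕ Fin b)` with
`a = k₂`, `c = k₁ − k₂`, `b = n − k₁` (so `n = a + c + b`, `k₁ = a + c`,
`k₂ = a`); the first `k₂` coordinates are the `Fin a` component and the first
`k₁` coordinates are the `Fin a` and `Fin c` components.  The stacked matrix
`H₂ = [H₁; Q]` is `Matrix.fromRows H₁ Q`, its last `n − k₂` columns form
`B = (Matrix.fromRows H₁ Q).submatrix id Sum.inr`, and `Binv` is the inverse
of `B`. -/

/-- `pad₂ w`: first `k₂` entries `0`, followed by `w ∈ F₂^{n−k₂}`. -/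
def padGP₂ {a b c : ℕ} (w : (Fin c ⊕ Fin b) → ZMod 2) :
    (Fin a ⊕ (Fin c ⊕ Fin b)) → ZMod 2 :=
  Sum.elim (fun _ => 0) w

/-- `pad₁ v₁`: first `k₁` entries `0`, followed by `v₁ ∈ F₂^{n−k₁}`. -/
def padGP₁ {a b c : ℕ} (v₁ : Fin b → ZMod 2) :
    (Fin a ⊕ (Fin c ⊕ Fin b)) → ZMod 2 :=
  Sum.elim (fun _ => 0) (Sum.elim (fun _ => 0) v₁)

/-- `H̃₂`: first `k₂` rows zero, last `n − k₂` rows equal `B⁻¹H₂`. -/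
def HtildeGP {a b c : ℕ}
    (H₁ : Matrix (Fin b) (Fin a ⊕ (Fin c ⊕ Fin b)) (ZMod 2))
    (Q : Matrix (Fin c) (Fin a ⊕ (Fin c ⊕ Fin b)) (ZMod 2))
    (Binv : Matrix (Fin c ⊕ Fin b) (Fin b ⊕ Fin c) (ZMod 2)) :
    Matrix (Fin a ⊕ (Fin c ⊕ Fin b)) (Fin a ⊕ (Fin c ⊕ Fin b)) (ZMod 2) :=
  Matrix.of fun i j =>
    Sum.elim (fun _ => (0 : ZMod 2))
      (fun i' => (Binv * Matrix.fromRows H₁ Q) i' j) i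

/-! Since `φ₂` takes values in `C₂ = ker H₂`, the transmitted word `X = φ₂(S, U) ⊕ U` has the
same syndrome `H₂ X = (V₁, M)` as `U`, so a message error forces the Slepian–Wolf decoder, fed
with `pad₁(H₁ X)`, to miss `X`. Together with its syndrome `H₂ V₂`, the encoder
`(M, V₁, V₂) ↦ U` is a bijection; hence `U` is uniform and independent of `S`, and the error
probability is at most the mean of the Slepian–Wolf block error (a number in `[0, 1]`) under
the law of `(φ₂(S, U), S, U)`. Replacing that law by the symmetrized one costs at most the
shaping distance `δ`, and under the symmetrized law `(X_c ⊕ V, S)` is i.i.d. `p_{X,S}`, so the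
Slepian–Wolf guarantee bounds the remaining mean by `ε`. -/

namespace Matrix

variable {R ι κ : Type*} [CommRing R] [Fintype ι] [Fintype κ] [DecidableEq κ]

theorem mulVec_mul_mulVec_of_mul_eq_one {H : Matrix κ ι R} {E : Matrix ι κ R} (hHE : H * E = 1)
    (w : κ → R) : H *ᵥ E *ᵥ w = w := by
  rw [mulVec_mulVec, hHE, one_mulVec]

theorem mulVec_add_sub_mul_mulVec {H : Matrix κ ι R} {E : Matrix ι κ R} (hHE : H * E = 1)
    (w : κ → R) (v : ι → R) : H *ᵥ (E *ᵥ w + v - (E * H) *ᵥ v) = w := by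
  simp only [← mulVec_mulVec, mulVec_sub, mulVec_add, mulVec_mul_mulVec_of_mul_eq_one hHE,
    add_sub_cancel_right]

/-- `v - E H v` runs through `ker H` and `E w` has syndrome `w`; the syndrome `H v` records the
part of `v` that the projection forgets. -/
def syndromeEquiv (H : Matrix κ ι R) (E : Matrix ι κ R) (hHE : H * E = 1) :
    (κ → R) × (ι → R) ≃ (ι → R) × (κ → R) where
  toFun p := (E *ᵥ p.1 + p.2 - (E * H) *ᵥ p.2, H *ᵥ p.2)
  invFun q := (H *ᵥ q.1, q.1 - (E * H) *ᵥ q.1 + E *ᵥ q.2)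
  left_inv := by
    rintro ⟨w, v⟩
    refine Prod.ext (mulVec_add_sub_mul_mulVec hHE w v) ?_
    dsimp only
    rw [← mulVec_mulVec (E *ᵥ w + v - (E * H) *ᵥ v), mulVec_add_sub_mul_mulVec hHE,
      ← mulVec_mulVec]
    abel
  right_inv := by
    rintro ⟨u, t⟩
    refine Prod.ext ?_ ?_ <;>
      simp only [← mulVec_mulVec, mulVec_add, mulVec_sub, mulVec_mul_mulVec_of_mul_eq_one hHE] <;>
      abel

theorem sum_sum_mulVec_add_sub_mul_mulVec {β : Type*} [AddCommMonoid β] [Fintype R] [DecidableEq ι]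
    (H : Matrix κ ι R) (E : Matrix ι κ R) (hHE : H * E = 1) (F : (ι → R) → β) :
    ∑ w : κ → R, ∑ v : ι → R, F (E *ᵥ w + v - (E * H) *ᵥ v)
      = Fintype.card (κ → R) • ∑ u, F u := by
  calc ∑ w : κ → R, ∑ v : ι → R, F (E *ᵥ w + v - (E * H) *ᵥ v)
      = ∑ p, F (syndromeEquiv H E hHE p).1 := (Fintype.sum_prod_type' _).symm
    _ = ∑ q : (ι → R) × (κ → R), F q.1 := (syndromeEquiv H E hHE).sum_comp (fun q => F q.1)
    _ = Fintype.card (κ → R) • ∑ u, F u := by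
      rw [Fintype.sum_prod_type, Finset.smul_sum]
      simp

end Matrix

theorem sum_mul_le_sum_mul_add_half_sum_abs_sub {β : Type*} [Fintype β] (A B G : β → ℝ)
    (hG0 : ∀ x, 0 ≤ G x) (hG1 : ∀ x, G x ≤ 1) (hAB : ∑ x, A x ≤ ∑ x, B x) :
    ∑ x, A x * G x ≤ ∑ x, B x * G x + 1 / 2 * ∑ x, |A x - B x| := by
  have key (x : β) : A x * G x ≤ B x * G x + (A x - B x + |A x - B x|) / 2 := by
    rcases le_total (B x) (A x) with h | h
    · rw [abs_of_nonneg (sub_nonneg.mpr h)]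
      nlinarith [mul_nonneg (sub_nonneg.mpr h) (sub_nonneg.mpr (hG1 x))]
    · rw [abs_of_nonpos (sub_nonpos.mpr h)]
      nlinarith [mul_nonneg (sub_nonneg.mpr h) (hG0 x)]
  calc ∑ x, A x * G x ≤ ∑ x, (B x * G x + (A x - B x + |A x - B x|) / 2) :=
        Finset.sum_le_sum fun x _ => key x
    _ = ∑ x, B x * G x + ((∑ x, A x - ∑ x, B x) + ∑ x, |A x - B x|) / 2 := by
        rw [Finset.sum_add_distrib, ← Finset.sum_div, Finset.sum_add_distrib,
          Finset.sum_sub_distrib]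
    _ ≤ _ := by linarith

theorem sum_sum_sum_mul_le_sum_sum_sum_mul_add_half_sum_sum_sum_abs_sub {X S V : Type*}
    [Fintype X] [Fintype S] [Fintype V] (A B G : X → S → V → ℝ)
    (hG0 : ∀ x s v, 0 ≤ G x s v) (hG1 : ∀ x s v, G x s v ≤ 1)
    (hAB : ∑ x, ∑ s, ∑ v, A x s v ≤ ∑ x, ∑ s, ∑ v, B x s v) :
    ∑ x, ∑ s, ∑ v, A x s v * G x s v
      ≤ ∑ x, ∑ s, ∑ v, B x s v * G x s v + 1 / 2 * ∑ x, ∑ s, ∑ v, |A x s v - B x s v| := by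
  have h := sum_mul_le_sum_mul_add_half_sum_abs_sub (β := X × S × V)
    (fun p => A p.1 p.2.1 p.2.2) (fun p => B p.1 p.2.1 p.2.2) (fun p => G p.1 p.2.1 p.2.2)
    (fun _ => hG0 _ _ _) (fun _ => hG1 _ _ _) (by simpa only [Fintype.sum_prod_type] using hAB)
  simpa only [Fintype.sum_prod_type] using h

theorem sum_sum_sum_ite_eq_mul {X S V : Type*} [Fintype X] [DecidableEq X] [Fintype S]
    [Fintype V] (φ : S → V → X) (w : S → V → ℝ) (F : X → S → V → ℝ) :
    ∑ x, ∑ s, ∑ v, (if φ s v = x then w s v else 0) * F x s v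
      = ∑ s, ∑ v, w s v * F (φ s v) s v := by
  rw [Finset.sum_comm]
  refine Finset.sum_congr rfl fun s _ => ?_
  rw [Finset.sum_comm]
  refine Finset.sum_congr rfl fun v _ => ?_
  simp only [ite_mul, zero_mul, Finset.sum_ite_eq, Finset.mem_univ, if_true]

section BlockCode

variable {ι 𝒮 𝒴 α : Type*} [Fintype ι] [DecidableEq ι] [Fintype 𝒴] [DecidableEq α]

def blockErrorProb (ch : α → 𝒮 → 𝒴 → ℝ) (dec : (ι → 𝒴) → ι → α) (x : ι → α)
    (s : ι → 𝒮) : ℝ :=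
  ∑ y, if dec y ≠ x then ∏ i, ch (x i) (s i) (y i) else 0

variable {ch : α → 𝒮 → 𝒴 → ℝ}

theorem blockErrorProb_nonneg (hch0 : ∀ x s y, 0 ≤ ch x s y) (dec : (ι → 𝒴) → ι → α)
    (x : ι → α) (s : ι → 𝒮) : 0 ≤ blockErrorProb ch dec x s :=
  Finset.sum_nonneg fun _ _ => by
    split_ifs
    exacts [Finset.prod_nonneg fun _ _ => hch0 _ _ _, le_rfl]

theorem blockErrorProb_le_one (hch0 : ∀ x s y, 0 ≤ ch x s y)
    (hch1 : ∀ x s, ∑ y, ch x s y = 1) (dec : (ι → 𝒴) → ι → α) (x : ι → α) (s : ι → 𝒮) :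
    blockErrorProb ch dec x s ≤ 1 :=
  calc blockErrorProb ch dec x s ≤ ∑ y : ι → 𝒴, ∏ i, ch (x i) (s i) (y i) :=
        Finset.sum_le_sum fun _ _ => by
          split_ifs
          exacts [le_rfl, Finset.prod_nonneg fun _ _ => hch0 _ _ _]
    _ = 1 := by rw [← Fintype.prod_sum]; exact Finset.prod_eq_one fun i _ => hch1 _ _

theorem sum_sum_prod_mul_blockErrorProb [Fintype 𝒮] [Fintype α] (pS : 𝒮 → ℝ) (pXS : 𝒮 → α → ℝ)
    (dec : (ι → α) → (ι → 𝒴) → ι → α) :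
    ∑ s : ι → 𝒮, ∑ x : ι → α, (∏ i, pS (s i) * pXS (s i) (x i)) *
        blockErrorProb ch (dec x) x s
      = ∑ x : ι → α, ∑ y : ι → 𝒴, if dec x y ≠ x then
          ∏ i, ∑ σ, pS σ * pXS σ (x i) * ch (x i) σ (y i) else 0 := by
  rw [Finset.sum_comm]
  refine Finset.sum_congr rfl fun x _ => ?_
  simp only [blockErrorProb, Finset.mul_sum]
  rw [Finset.sum_comm]
  refine Finset.sum_congr rfl fun y _ => ?_
  split_ifs
  · simp only [← Finset.prod_mul_distrib, Fintype.prod_sum]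
  · simp only [mul_zero, Finset.sum_const_zero]

end BlockCode

section Symmetrized

variable {ι 𝒮 : Type*} [Fintype ι] [DecidableEq ι] [Fintype 𝒮] (pS : 𝒮 → ℝ)
  (pXS : 𝒮 → ZMod 2 → ℝ)

theorem sum_sum_sum_prod_symmetrized (hpS1 : ∑ s, pS s = 1)
    (hpXS1 : ∀ s, ∑ x, pXS s x = 1) :
    ∑ x : ι → ZMod 2, ∑ s : ι → 𝒮, ∑ v : ι → ZMod 2,
      ∏ i, 1 / 2 * pS (s i) * pXS (s i) (x i + v i) = 1 := by
  have hshift (σ : 𝒮) (x : ZMod 2) : ∑ w, pXS σ (x + w) = 1 :=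
    (Equiv.sum_comp (Equiv.addLeft x) (pXS σ)).trans (hpXS1 σ)
  have hv (x : ι → ZMod 2) (s : ι → 𝒮) :
      ∑ v : ι → ZMod 2, ∏ i, 1 / 2 * pS (s i) * pXS (s i) (x i + v i) = ∏ i, 1 / 2 * pS (s i) :=
    calc _ = ∏ i, ∑ w, 1 / 2 * pS (s i) * pXS (s i) (x i + w) := (Fintype.prod_sum _).symm
      _ = _ := by
        simp only [← Finset.mul_sum, hshift, mul_one]
  have hs : ∑ s : ι → 𝒮, ∏ i, 1 / 2 * pS (s i) = (1 / 2) ^ Fintype.card ι := by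
    rw [← Fintype.prod_sum (fun _ σ => 1 / 2 * pS σ), ← Finset.mul_sum, hpS1, mul_one,
      Finset.prod_const, Finset.card_univ]
  simp only [hv, hs, Finset.sum_const, Finset.card_univ, Fintype.card_fun, ZMod.card,
    nsmul_eq_mul]
  push_cast
  rw [← mul_pow]
  norm_num

theorem sum_sum_sum_prod_symmetrized_mul (G : (ι → ZMod 2) → (ι → 𝒮) → ℝ) :
    ∑ xc : ι → ZMod 2, ∑ s : ι → 𝒮, ∑ v : ι → ZMod 2,
      (∏ i, 1 / 2 * pS (s i) * pXS (s i) (xc i + v i)) * G (xc + v) s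
      = ∑ s : ι → 𝒮, ∑ x : ι → ZMod 2, (∏ i, pS (s i) * pXS (s i) (x i)) * G x s := by
  have hshift (xc : ι → ZMod 2) (s : ι → 𝒮) :
      ∑ v : ι → ZMod 2, (∏ i, 1 / 2 * pS (s i) * pXS (s i) (xc i + v i)) * G (xc + v) s
        = ∑ x : ι → ZMod 2, (∏ i, 1 / 2 * pS (s i) * pXS (s i) (x i)) * G x s :=
    Equiv.sum_comp (Equiv.addLeft xc)
      (fun x => (∏ i, 1 / 2 * pS (s i) * pXS (s i) (x i)) * G x s)
  have hhalf (s : ι → 𝒮) (x : ι → ZMod 2) :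
      ∏ i, 1 / 2 * pS (s i) * pXS (s i) (x i)
        = (1 / 2) ^ Fintype.card ι * ∏ i, pS (s i) * pXS (s i) (x i) := by
    simp only [mul_assoc, Finset.prod_mul_distrib, Finset.prod_const, Finset.card_univ]
  simp only [hshift]
  simp only [hhalf]
  simp only [mul_assoc, ← Finset.mul_sum, Finset.sum_const, Finset.card_univ,
    Fintype.card_fun, ZMod.card, nsmul_eq_mul]
  push_cast
  rw [← mul_assoc, ← mul_pow]
  norm_num

theorem sum_sum_sum_ite_prod_mul_one_div_two_pow (hpS1 : ∑ s, pS s = 1)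
    (φ : (ι → 𝒮) → (ι → ZMod 2) → ι → ZMod 2) :
    ∑ x : ι → ZMod 2, ∑ s : ι → 𝒮, ∑ v : ι → ZMod 2,
      (if φ s v = x then (∏ i, pS (s i)) * (1 / 2 ^ Fintype.card ι) else 0) = 1 := by
  have h := sum_sum_sum_ite_eq_mul φ (fun s _ => (∏ i, pS (s i)) * (1 / 2 ^ Fintype.card ι))
    fun _ _ _ => 1
  simp only [mul_one] at h
  have hprod : ∑ s : ι → 𝒮, ∏ i, pS (s i) = 1 := by
    rw [← Fintype.prod_sum fun _ => pS]
    exact Finset.prod_eq_one fun _ _ => hpS1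
  rw [h]
  simp only [Finset.sum_const, Finset.card_univ, Fintype.card_fun, ZMod.card, nsmul_eq_mul,
    ← Finset.sum_mul, ← Finset.mul_sum, hprod]
  simp

end Symmetrized

section Encoder

open Matrix

variable {a b c : ℕ} (H₁ : Matrix (Fin b) (Fin a ⊕ (Fin c ⊕ Fin b)) (ZMod 2))
  (Q : Matrix (Fin c) (Fin a ⊕ (Fin c ⊕ Fin b)) (ZMod 2))
  (Binv : Matrix (Fin c ⊕ Fin b) (Fin b ⊕ Fin c) (ZMod 2))

theorem padGP₂_mulVec (w : Fin b ⊕ Fin c → ZMod 2) :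
    padGP₂ (a := a) (Binv *ᵥ w) = fromRows 0 Binv *ᵥ w := by
  rw [fromRows_mulVec, zero_mulVec]
  rfl

theorem HtildeGP_eq_fromRows_mul :
    HtildeGP H₁ Q Binv = fromRows 0 Binv * fromRows H₁ Q := by
  ext (i | i) j <;> simp [HtildeGP]

theorem fromRows_mul_fromRows_zero (hB : (fromRows H₁ Q).submatrix id Sum.inr * Binv = 1) :
    fromRows H₁ Q * fromRows (0 : Matrix (Fin a) _ _) Binv = 1 := by
  rw [← hB]
  ext i j
  simp [mul_apply, Fintype.sum_sum_type]

def gpEncode (w : Fin b ⊕ Fin c → ZMod 2) (v : Fin a ⊕ (Fin c ⊕ Fin b) → ZMod 2) :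
    Fin a ⊕ (Fin c ⊕ Fin b) → ZMod 2 :=
  padGP₂ (Binv *ᵥ w) + v + HtildeGP H₁ Q Binv *ᵥ v

theorem gpEncode_eq (w : Fin b ⊕ Fin c → ZMod 2) (v : Fin a ⊕ (Fin c ⊕ Fin b) → ZMod 2) :
    gpEncode H₁ Q Binv w v
      = fromRows 0 Binv *ᵥ w + v - (fromRows 0 Binv * fromRows H₁ Q) *ᵥ v := by
  rw [gpEncode, padGP₂_mulVec, HtildeGP_eq_fromRows_mul, sub_eq_add_neg]
  congr 1
  funext i
  exact (ZMod.neg_eq_self_mod_two _).symm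

variable {H₁ Q Binv}

theorem fromRows_mulVec_gpEncode (hB : (fromRows H₁ Q).submatrix id Sum.inr * Binv = 1)
    (w : Fin b ⊕ Fin c → ZMod 2) (v : Fin a ⊕ (Fin c ⊕ Fin b) → ZMod 2) :
    fromRows H₁ Q *ᵥ gpEncode H₁ Q Binv w v = w := by
  rw [gpEncode_eq, mulVec_add_sub_mul_mulVec (fromRows_mul_fromRows_zero H₁ Q Binv hB)]

theorem sum_sum_sum_gpEncode (hB : (fromRows H₁ Q).submatrix id Sum.inr * Binv = 1)
    (F : (Fin a ⊕ (Fin c ⊕ Fin b) → ZMod 2) → ℝ) :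
    ∑ m : Fin c → ZMod 2, ∑ v₁ : Fin b → ZMod 2, ∑ v₂ : Fin a ⊕ (Fin c ⊕ Fin b) → ZMod 2,
      F (gpEncode H₁ Q Binv (Sum.elim v₁ m) v₂) = 2 ^ (b + c) * ∑ u, F u := by
  rw [Finset.sum_comm, ← Fintype.sum_prod_type']
  refine (Equiv.sum_comp (Equiv.sumArrowEquivProdArrow _ _ _).symm
    (fun w => ∑ v₂, F (gpEncode H₁ Q Binv w v₂))).trans ?_
  simp only [gpEncode_eq]
  rw [sum_sum_mulVec_add_sub_mul_mulVec _ _ (fromRows_mul_fromRows_zero H₁ Q Binv hB), nsmul_eq_mul]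
  simp

theorem sum_ite_messageError_le {𝒮 𝒴 : Type*} [Fintype 𝒴] {ch : ZMod 2 → 𝒮 → 𝒴 → ℝ}
    (hch0 : ∀ x s y, 0 ≤ ch x s y)
    (φ₁ : (Fin a ⊕ (Fin c ⊕ Fin b) → ZMod 2) → (Fin a ⊕ (Fin c ⊕ Fin b) → 𝒴) →
      Fin a ⊕ (Fin c ⊕ Fin b) → ZMod 2)
    {m : Fin c → ZMod 2} {v₁ : Fin b → ZMod 2} {x : Fin a ⊕ (Fin c ⊕ Fin b) → ZMod 2}
    (hx : fromRows H₁ Q *ᵥ x = Sum.elim v₁ m) (s : Fin a ⊕ (Fin c ⊕ Fin b) → 𝒮) {r : ℝ}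
    (hr : 0 ≤ r) :
    ∑ y, (if Q *ᵥ φ₁ (padGP₁ v₁) y ≠ m then r * ∏ i, ch (x i) (s i) (y i) else 0)
      ≤ r * blockErrorProb ch (φ₁ (padGP₁ (H₁ *ᵥ x))) x s := by
  rw [fromRows_mulVec] at hx
  obtain rfl : H₁ *ᵥ x = v₁ := funext fun i => congrFun hx (Sum.inl i)
  obtain rfl : Q *ᵥ x = m := funext fun i => congrFun hx (Sum.inr i)
  rw [blockErrorProb, Finset.mul_sum]
  refine Finset.sum_le_sum fun y _ => ?_
  rw [mul_ite, mul_zero]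
  split_ifs with hQ hdec hdec
  · exact le_rfl
  · exact absurd (by rw [not_not.mp hdec]) hQ
  · exact mul_nonneg hr (Finset.prod_nonneg fun _ _ => hch0 _ _ _)
  · exact le_rfl

end Encoder

section Scheme

open Matrix

variable {a b c : ℕ} {𝒮 𝒴 : Type*} [Fintype 𝒮] [Fintype 𝒴]

theorem sum_messageError_le_sum_ite_mul_blockErrorProb
    {H₁ : Matrix (Fin b) (Fin a ⊕ (Fin c ⊕ Fin b)) (ZMod 2)}
    {Q : Matrix (Fin c) (Fin a ⊕ (Fin c ⊕ Fin b)) (ZMod 2)}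
    {Binv : Matrix (Fin c ⊕ Fin b) (Fin b ⊕ Fin c) (ZMod 2)}
    (hB : (fromRows H₁ Q).submatrix id Sum.inr * Binv = 1)
    {pS : 𝒮 → ℝ} (hpS0 : ∀ s, 0 ≤ pS s) {ch : ZMod 2 → 𝒮 → 𝒴 → ℝ}
    (hch0 : ∀ x s y, 0 ≤ ch x s y)
    (φ₁ : (Fin a ⊕ (Fin c ⊕ Fin b) → ZMod 2) → (Fin a ⊕ (Fin c ⊕ Fin b) → 𝒴) →
      Fin a ⊕ (Fin c ⊕ Fin b) → ZMod 2)
    {φ₂ : (Fin a ⊕ (Fin c ⊕ Fin b) → 𝒮) → (Fin a ⊕ (Fin c ⊕ Fin b) → ZMod 2) →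
      Fin a ⊕ (Fin c ⊕ Fin b) → ZMod 2}
    (hφ₂C : ∀ s u, fromRows H₁ Q *ᵥ φ₂ s u = 0) :
    ∑ m : Fin c → ZMod 2, ∑ v₁ : Fin b → ZMod 2, ∑ v₂ : Fin a ⊕ (Fin c ⊕ Fin b) → ZMod 2,
      ∑ s : Fin a ⊕ (Fin c ⊕ Fin b) → 𝒮, ∑ y : Fin a ⊕ (Fin c ⊕ Fin b) → 𝒴,
      (if Q *ᵥ φ₁ (padGP₁ v₁) y ≠ m then
        1 / 2 ^ c * (1 / 2 ^ b) * (1 / 2 ^ (a + c + b)) * (∏ i, pS (s i)) *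
          ∏ i, ch ((φ₂ s (gpEncode H₁ Q Binv (Sum.elim v₁ m) v₂)
            + gpEncode H₁ Q Binv (Sum.elim v₁ m) v₂) i) (s i) (y i)
      else 0)
    ≤ ∑ xc : Fin a ⊕ (Fin c ⊕ Fin b) → ZMod 2, ∑ s : Fin a ⊕ (Fin c ⊕ Fin b) → 𝒮,
      ∑ v : Fin a ⊕ (Fin c ⊕ Fin b) → ZMod 2,
      (if φ₂ s v = xc then (∏ i, pS (s i)) * (1 / 2 ^ (a + c + b)) else 0) *
        blockErrorProb ch (φ₁ (padGP₁ (H₁ *ᵥ (xc + v)))) (xc + v) s := by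
  set G := fun x s => blockErrorProb ch (φ₁ (padGP₁ (H₁ *ᵥ x))) x s
  have hsyndrome (w v s) :
      fromRows H₁ Q *ᵥ (φ₂ s (gpEncode H₁ Q Binv w v) + gpEncode H₁ Q Binv w v) = w := by
    rw [mulVec_add, hφ₂C, zero_add, fromRows_mulVec_gpEncode hB]
  calc _ ≤ ∑ m : Fin c → ZMod 2, ∑ v₁ : Fin b → ZMod 2, ∑ v₂,
        (fun u => ∑ s, 1 / 2 ^ c * (1 / 2 ^ b) * (1 / 2 ^ (a + c + b)) * (∏ i, pS (s i)) *
          G (φ₂ s u + u) s) (gpEncode H₁ Q Binv (Sum.elim v₁ m) v₂) := by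
        refine Finset.sum_le_sum fun m _ => Finset.sum_le_sum fun v₁ _ =>
          Finset.sum_le_sum fun v₂ _ => Finset.sum_le_sum fun s _ => ?_
        exact sum_ite_messageError_le hch0 φ₁ (hsyndrome _ _ s) s
          (mul_nonneg (by positivity) (Finset.prod_nonneg fun i _ => hpS0 _))
    _ = ∑ u, ∑ s, (∏ i, pS (s i)) * (1 / 2 ^ (a + c + b)) * G (φ₂ s u + u) s := by
        rw [sum_sum_sum_gpEncode hB (fun u => ∑ s, 1 / 2 ^ c * (1 / 2 ^ b) *
          (1 / 2 ^ (a + c + b)) * (∏ i, pS (s i)) * G (φ₂ s u + u) s), Finset.mul_sum]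
        refine Finset.sum_congr rfl fun u _ => ?_
        rw [Finset.mul_sum]
        refine Finset.sum_congr rfl fun s _ => ?_
        rw [pow_add]
        field_simp
    _ = ∑ s, ∑ u, (∏ i, pS (s i)) * (1 / 2 ^ (a + c + b)) * G (φ₂ s u + u) s :=
        Finset.sum_comm
    _ = _ := (sum_sum_sum_ite_eq_mul φ₂ _ fun xc s v => G (xc + v) s).symm

end Scheme

theorem stmt12_general (a b c : ℕ)
    (𝒮 𝒴 : Type) [Fintype 𝒮] [Fintype 𝒴]
    (pS : 𝒮 → ℝ) (hpS0 : ∀ s, 0 ≤ pS s) (hpS1 : ∑ s : 𝒮, pS s = 1)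
    (pXS : 𝒮 → ZMod 2 → ℝ)
    (hpXS1 : ∀ s, ∑ x : ZMod 2, pXS s x = 1)
    (ch : ZMod 2 → 𝒮 → 𝒴 → ℝ) (hch0 : ∀ x s y, 0 ≤ ch x s y)
    (hch1 : ∀ x s, ∑ y : 𝒴, ch x s y = 1)
    (H₁ : Matrix (Fin b) (Fin a ⊕ (Fin c ⊕ Fin b)) (ZMod 2))
    (Q : Matrix (Fin c) (Fin a ⊕ (Fin c ⊕ Fin b)) (ZMod 2))
    (Binv : Matrix (Fin c ⊕ Fin b) (Fin b ⊕ Fin c) (ZMod 2))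
    (hB : (Matrix.fromRows H₁ Q).submatrix id Sum.inr * Binv = 1)
    (φ₁ : ((Fin a ⊕ (Fin c ⊕ Fin b)) → ZMod 2) →
          ((Fin a ⊕ (Fin c ⊕ Fin b)) → 𝒴) →
          ((Fin a ⊕ (Fin c ⊕ Fin b)) → ZMod 2))
    (ε : ℝ)
    (hε : ∑ x : (Fin a ⊕ (Fin c ⊕ Fin b)) → ZMod 2,
        ∑ y : (Fin a ⊕ (Fin c ⊕ Fin b)) → 𝒴,
        (if φ₁ (padGP₁ (H₁.mulVec x)) y ≠ x then
          ∏ i, (∑ s : 𝒮, pS s * pXS s (x i) * ch (x i) s (y i))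
        else 0) ≤ ε)
    (φ₂ : ((Fin a ⊕ (Fin c ⊕ Fin b)) → 𝒮) →
          ((Fin a ⊕ (Fin c ⊕ Fin b)) → ZMod 2) →
          ((Fin a ⊕ (Fin c ⊕ Fin b)) → ZMod 2))
    (hφ₂C : ∀ s u, (Matrix.fromRows H₁ Q).mulVec (φ₂ s u) = 0)
    (δ : ℝ)
    (hδ : (1 / 2) * ∑ xc : (Fin a ⊕ (Fin c ⊕ Fin b)) → ZMod 2,
        ∑ s : (Fin a ⊕ (Fin c ⊕ Fin b)) → 𝒮,
        ∑ v : (Fin a ⊕ (Fin c ⊕ Fin b)) → ZMod 2,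
        |(if φ₂ s v = xc then
            (∏ i, pS (s i)) * ((1 : ℝ) / 2 ^ (a + c + b))
          else 0)
          - ∏ i, ((1 : ℝ) / 2) * pS (s i) * pXS (s i) (xc i + v i)| ≤ δ) :
    ∑ m : Fin c → ZMod 2, ∑ v₁ : Fin b → ZMod 2,
      ∑ v₂ : (Fin a ⊕ (Fin c ⊕ Fin b)) → ZMod 2,
      ∑ s : (Fin a ⊕ (Fin c ⊕ Fin b)) → 𝒮,
      ∑ y : (Fin a ⊕ (Fin c ⊕ Fin b)) → 𝒴,
      (let u : (Fin a ⊕ (Fin c ⊕ Fin b)) → ZMod 2 :=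
        padGP₂ (Binv.mulVec (Sum.elim v₁ m)) + v₂ + (HtildeGP H₁ Q Binv).mulVec v₂
      let x : (Fin a ⊕ (Fin c ⊕ Fin b)) → ZMod 2 := φ₂ s u + u
      if Q.mulVec (φ₁ (padGP₁ v₁) y) ≠ m then
        ((1 : ℝ) / 2 ^ c) * ((1 : ℝ) / 2 ^ b) * ((1 : ℝ) / 2 ^ (a + c + b)) *
          (∏ i, pS (s i)) * ∏ i, ch (x i) (s i) (y i)
      else 0) ≤ δ + ε := by
  have hn : Fintype.card (Fin a ⊕ (Fin c ⊕ Fin b)) = a + c + b := by simp [add_assoc]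
  have hmass := sum_sum_sum_ite_prod_mul_one_div_two_pow pS hpS1 φ₂
  rw [hn] at hmass
  dsimp only
  simp only [← gpEncode.eq_1]
  calc _ ≤ _ := sum_messageError_le_sum_ite_mul_blockErrorProb hB hpS0 hch0 φ₁ hφ₂C
    _ ≤ _ := sum_sum_sum_mul_le_sum_sum_sum_mul_add_half_sum_sum_sum_abs_sub
        (fun xc s v => if φ₂ s v = xc then (∏ i, pS (s i)) * (1 / 2 ^ (a + c + b)) else 0)
        (fun xc s v => ∏ i, 1 / 2 * pS (s i) * pXS (s i) (xc i + v i))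
        (fun xc s v => blockErrorProb ch (φ₁ (padGP₁ (H₁.mulVec (xc + v)))) (xc + v) s)
        (fun _ _ _ => blockErrorProb_nonneg hch0 _ _ _)
        (fun _ _ _ => blockErrorProb_le_one hch0 hch1 _ _ _)
        (hmass.trans (sum_sum_sum_prod_symmetrized pS pXS hpS1 hpXS1).symm).le
    _ ≤ ε + δ := by
        refine add_le_add (le_of_eq_of_le ?_ hε) hδ
        rw [sum_sum_sum_prod_symmetrized_mul pS pXS
            (fun x s => blockErrorProb ch (φ₁ (padGP₁ (H₁.mulVec x))) x s),
          sum_sum_prod_mul_blockErrorProb pS pXS fun x => φ₁ (padGP₁ (H₁.mulVec x))]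
    _ = δ + ε := add_comm ε δ

/-- **Gelfand–Pinsker coding scheme.**  `M` uniform on `F₂^{k₁−k₂}`, `V₁`
uniform on `F₂^{n−k₁}`, `V₂ⁿ` i.i.d. uniform on `F₂`, `Sⁿ` i.i.d. with law
`p(s)`, all mutually independent.  Set `Zⁿ = pad₂(B⁻¹(V₁,M))`,
`Uⁿ = Zⁿ ⊕ V₂ⁿ ⊕ H̃₂V₂ⁿ`, transmit `Xⁿ = φ₂(Sⁿ,Uⁿ) ⊕ Uⁿ`, receive `Yⁿ`
through the channel `p(y|x,s)`, and decode `X̂ⁿ = φ₁(pad₁(V₁), Yⁿ)`,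
`M̂ = QX̂ⁿ`.  If the Slepian–Wolf code `φ₁` has error probability ≤ `ε` on the
problem `p(x,y) = ∑ₛ p(s)p(x|s)p(y|x,s)`, and the point-to-point code `φ₂`
takes values in `C₂ = ker H₂` and has shaping distance ≤ `δ` with respect to
the symmetrized channel `p̄(s,v|x) = p_{X,S}(x⊕v,s)`, then
`P{M̂ ≠ M} ≤ δ + ε`. -/
theorem stmt12 (a b c : ℕ) (hb : 0 < b) (hc : 0 < c)
    (𝒮 𝒴 : Type) [Fintype 𝒮] [Fintype 𝒴]
    (pS : 𝒮 → ℝ) (hpS0 : ∀ s, 0 ≤ pS s) (hpS1 : ∑ s : 𝒮, pS s = 1)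
    (pXS : 𝒮 → ZMod 2 → ℝ) (hpXS0 : ∀ s x, 0 ≤ pXS s x)
    (hpXS1 : ∀ s, ∑ x : ZMod 2, pXS s x = 1)
    (ch : ZMod 2 → 𝒮 → 𝒴 → ℝ) (hch0 : ∀ x s y, 0 ≤ ch x s y)
    (hch1 : ∀ x s, ∑ y : 𝒴, ch x s y = 1)
    (H₁ : Matrix (Fin b) (Fin a ⊕ (Fin c ⊕ Fin b)) (ZMod 2))
    (Q : Matrix (Fin c) (Fin a ⊕ (Fin c ⊕ Fin b)) (ZMod 2))
    (Binv : Matrix (Fin c ⊕ Fin b) (Fin b ⊕ Fin c) (ZMod 2))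
    (hB : (Matrix.fromRows H₁ Q).submatrix id Sum.inr * Binv = 1)
    (hB' : Binv * (Matrix.fromRows H₁ Q).submatrix id Sum.inr = 1)
    (φ₁ : ((Fin a ⊕ (Fin c ⊕ Fin b)) → ZMod 2) →
          ((Fin a ⊕ (Fin c ⊕ Fin b)) → 𝒴) →
          ((Fin a ⊕ (Fin c ⊕ Fin b)) → ZMod 2))
    (ε : ℝ)
    (hε : ∑ x : (Fin a ⊕ (Fin c ⊕ Fin b)) → ZMod 2,
        ∑ y : (Fin a ⊕ (Fin c ⊕ Fin b)) → 𝒴,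
        (if φ₁ (padGP₁ (H₁.mulVec x)) y ≠ x then
          ∏ i, (∑ s : 𝒮, pS s * pXS s (x i) * ch (x i) s (y i))
        else 0) ≤ ε)
    (φ₂ : ((Fin a ⊕ (Fin c ⊕ Fin b)) → 𝒮) →
          ((Fin a ⊕ (Fin c ⊕ Fin b)) → ZMod 2) →
          ((Fin a ⊕ (Fin c ⊕ Fin b)) → ZMod 2))
    (hφ₂C : ∀ s u, (Matrix.fromRows H₁ Q).mulVec (φ₂ s u) = 0)
    (δ : ℝ)
    (hδ : (1 / 2) * ∑ xc : (Fin a ⊕ (Fin c ⊕ Fin b)) → ZMod 2,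
        ∑ s : (Fin a ⊕ (Fin c ⊕ Fin b)) → 𝒮,
        ∑ v : (Fin a ⊕ (Fin c ⊕ Fin b)) → ZMod 2,
        |(if φ₂ s v = xc then
            (∏ i, pS (s i)) * ((1 : ℝ) / 2 ^ (a + c + b))
          else 0)
          - ∏ i, ((1 : ℝ) / 2) * pS (s i) * pXS (s i) (xc i + v i)| ≤ δ) :
    ∑ m : Fin c → ZMod 2, ∑ v₁ : Fin b → ZMod 2,
      ∑ v₂ : (Fin a ⊕ (Fin c ⊕ Fin b)) → ZMod 2,
      ∑ s : (Fin a ⊕ (Fin c ⊕ Fin b)) → 𝒮,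
      ∑ y : (Fin a ⊕ (Fin c ⊕ Fin b)) → 𝒴,
      (let u : (Fin a ⊕ (Fin c ⊕ Fin b)) → ZMod 2 :=
        padGP₂ (Binv.mulVec (Sum.elim v₁ m)) + v₂ + (HtildeGP H₁ Q Binv).mulVec v₂
      let x : (Fin a ⊕ (Fin c ⊕ Fin b)) → ZMod 2 := φ₂ s u + u
      if Q.mulVec (φ₁ (padGP₁ v₁) y) ≠ m then
        ((1 : ℝ) / 2 ^ c) * ((1 : ℝ) / 2 ^ b) * ((1 : ℝ) / 2 ^ (a + c + b)) *
          (∏ i, pS (s i)) * ∏ i, ch (x i) (s i) (y i)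
      else 0) ≤ δ + ε :=
  stmt12_general a b c 𝒮 𝒴 pS hpS0 hpS1 pXS hpXS1 ch hch0 hch1 H₁ Q Binv hB φ₁ ε hε φ₂ hφ₂C δ hδ
end

section
/- Let α ∈ (0,1), δ ≥ 0, and let φ₂: F₂ⁿ → F₂ⁿ have shaping Hamming distance spectrum W₂ satisfying (1/2)·∑_{w=0}^{n} |P{W₂ = w} − C(n,w)·α^{w}(1−α)^{n−w}| ≤ δ. Let Uⁿ be i.i.d. uniform on F₂, set X̃ⁿ = φ₂(Uⁿ) ⊕ Uⁿ, and let Γ be a uniformly random permutation of {1,…,n} independent of Uⁿ; set Xⁿ = Γ(X̃ⁿ). Then (1/2)·∑_{xⁿ ∈ F₂ⁿ} |P{Xⁿ = xⁿ} − α^{wt(xⁿ)}(1−α)^{n−wt(xⁿ)}| ≤ δ. (Lemma 5: channel-input shaping in the block-Markov asymmetric channel coding scheme.) -/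
/-!
Both the law of `Xⁿ` and the i.i.d. `Bern(α)` law are invariant under permutations of the
coordinates, and permutations act transitively on the vectors of a given Hamming weight, so both
laws are constant on weight classes. For two laws that are constant on the fibres of a map, the
total variation distance equals that of their pushforwards. The pushforward of the law of `Xⁿ`
under the weight is the law of `wt(φ₂(Uⁿ) ⊕ Uⁿ) = d_H(Uⁿ, φ₂(Uⁿ)) = W₂`, and that of `Bern(α)ⁿ`
is `Binom(n, α)`.
-/

open Finset Equiv
open scoped Pointwise

section FiberwiseConstant

variable {R : Type*} [AddCommGroup R] [LinearOrder R] [IsOrderedAddMonoid R]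

lemma Finset.sum_abs_eq_abs_sum_of_forall_eq {ι : Type*} {s : Finset ι} {f : ι → R}
    (hf : ∀ x ∈ s, ∀ y ∈ s, f x = f y) : ∑ x ∈ s, |f x| = |∑ x ∈ s, f x| := by
  rcases s.eq_empty_or_nonempty with rfl | ⟨x₀, hx₀⟩
  · simp
  rw [sum_congr rfl fun x hx => hf x hx x₀ hx₀,
    sum_congr rfl fun x hx => congrArg abs (hf x hx x₀ hx₀), sum_const, sum_const, abs_nsmul]

lemma sum_abs_sub_eq_sum_abs_sub_fiberwise_of_const {ι κ : Type*} [Fintype ι] [DecidableEq κ]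
    {t : Finset κ} (g : ι → κ) (hg : ∀ x, g x ∈ t) {P Q : ι → R}
    (hP : ∀ x y, g x = g y → P x = P y) (hQ : ∀ x y, g x = g y → Q x = Q y) :
    ∑ x, |P x - Q x| = ∑ k ∈ t, |∑ x with g x = k, P x - ∑ x with g x = k, Q x| := by
  rw [← sum_fiberwise_of_maps_to fun x _ => hg x]
  refine sum_congr rfl fun k _ => ?_
  rw [← sum_sub_distrib]
  refine sum_abs_eq_abs_sum_of_forall_eq fun x hx y hy => ?_
  have hxy : g x = g y := (mem_filter.1 hx).2.trans (mem_filter.1 hy).2.symm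
  rw [hP x y hxy, hQ x y hxy]

end FiberwiseConstant

lemma hammingNorm_comp_perm {ι β : Type*} [Fintype ι] [DecidableEq ι] [Zero β] [DecidableEq β]
    (x : ι → β) (σ : Perm ι) : hammingNorm (x ∘ σ) = hammingNorm x :=
  card_equiv σ fun i => by simp

namespace ZMod

variable {ι : Type*} [Fintype ι] [DecidableEq ι]

omit [DecidableEq ι] in
lemma hammingDist_eq_hammingNorm_add (x y : ι → ZMod 2) :
    hammingDist x y = hammingNorm (x + y) := by
  simp [hammingDist, hammingNorm, CharTwo.add_eq_zero]

def supportEquiv (ι : Type*) [Fintype ι] [DecidableEq ι] : (ι → ZMod 2) ≃ Finset ι where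
  toFun x := {i | x i ≠ 0}
  invFun s i := if i ∈ s then 1 else 0
  left_inv x := funext fun i => by
    have : ∀ a : ZMod 2, (if a ≠ 0 then 1 else 0) = a := by decide
    simpa using this (x i)
  right_inv s := by ext; simp

lemma card_supportEquiv (x : ι → ZMod 2) : #(supportEquiv ι x) = hammingNorm x := rfl

lemma supportEquiv_comp_perm (x : ι → ZMod 2) (σ : Perm ι) :
    supportEquiv ι (x ∘ σ) = σ⁻¹ • supportEquiv ι x := by
  ext i; simp [supportEquiv, Finset.mem_inv_smul_finset_iff]

lemma card_filter_hammingNorm_eq (w : ℕ) :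
    #{x : ι → ZMod 2 | hammingNorm x = w} = (Fintype.card ι).choose w := by
  rw [← card_univ, ← card_powersetCard]
  exact card_equiv (supportEquiv ι) fun x => by simp [card_supportEquiv]

lemma sum_filter_hammingNorm_eq {M : Type*} [AddCommMonoid M] (f : ℕ → M) (w : ℕ) :
    ∑ x : ι → ZMod 2 with hammingNorm x = w, f (hammingNorm x) =
      (Fintype.card ι).choose w • f w := by
  rw [sum_congr rfl fun x hx => congrArg f (mem_filter.1 hx).2, sum_const,
    card_filter_hammingNorm_eq]

lemma exists_perm_comp_eq_of_hammingNorm_eq {x y : ι → ZMod 2}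
    (h : hammingNorm x = hammingNorm y) : ∃ σ : Perm ι, x ∘ σ = y := by
  obtain ⟨σ, hσ⟩ := Set.powersetCard.isPretransitive.exists_smul_eq
    (⟨supportEquiv ι x, rfl⟩ : Set.powersetCard ι (hammingNorm x)) ⟨supportEquiv ι y, h.symm⟩
  have hσ' : σ • supportEquiv ι x = supportEquiv ι y := by
    simpa only [Set.powersetCard.coe_smul] using congrArg Subtype.val hσ
  refine ⟨σ⁻¹, (supportEquiv ι).injective ?_⟩
  rw [supportEquiv_comp_perm, inv_inv, hσ']

end ZMod

section PermutedLaw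

variable {α ι β : Type*} [Fintype α] [Fintype ι] [DecidableEq ι] [DecidableEq β]

/-- With `c = 1 / (#(Perm ι) * #α)`, the law of `Γ(g(A))` for `A` uniform on `α` and `Γ` an
independent uniform permutation acting by `(Γ y) i = y (Γ⁻¹ i)`. -/
noncomputable def permutedLaw (c : ℝ) (g : α → ι → β) (x : ι → β) : ℝ :=
  ∑ γ : Perm ι, ∑ a, if g a ∘ γ.symm = x then c else 0

lemma permutedLaw_comp_perm (c : ℝ) (g : α → ι → β) (x : ι → β) (π : Perm ι) :
    permutedLaw c g (x ∘ π) = permutedLaw c g x := by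
  rw [permutedLaw, permutedLaw,
    ← Equiv.sum_comp (Equiv.mulLeft π) (fun γ => ∑ a, if g a ∘ γ.symm = x then c else 0)]
  refine sum_congr rfl fun γ _ => sum_congr rfl fun a _ => ?_
  simp only [Equiv.coe_mulLeft, Perm.mul_def, Equiv.symm_trans, Equiv.coe_trans,
    ← Function.comp_assoc, Equiv.comp_symm_eq]

lemma sum_permutedLaw_filter_hammingNorm [Fintype β] [Zero β] (c : ℝ) (g : α → ι → β) (w : ℕ) :
    ∑ x with hammingNorm x = w, permutedLaw c g x =
      Fintype.card (Perm ι) * (#{a | hammingNorm (g a) = w} * c) := by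
  simp only [permutedLaw]
  rw [sum_comm]
  have hγ : ∀ γ : Perm ι, ∑ x with hammingNorm x = w, ∑ a, (if g a ∘ γ.symm = x then c else 0) =
      ∑ a, if hammingNorm (g a) = w then c else 0 := fun γ => by
    rw [sum_comm]
    exact sum_congr rfl fun a _ => by simp only [sum_ite_eq, mem_filter_univ, hammingNorm_comp_perm]
  rw [sum_congr rfl fun γ _ => hγ γ, sum_const, card_univ, ← sum_filter, sum_const, nsmul_eq_mul,
    nsmul_eq_mul]

lemma permutedLaw_eq_of_hammingNorm_eq (c : ℝ) (g : α → ι → ZMod 2) {x y : ι → ZMod 2}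
    (h : hammingNorm x = hammingNorm y) : permutedLaw c g x = permutedLaw c g y := by
  obtain ⟨σ, rfl⟩ := ZMod.exists_perm_comp_eq_of_hammingNorm_eq h
  exact (permutedLaw_comp_perm c g x σ).symm

end PermutedLaw

theorem stmt15_general (n : ℕ) (α δ : ℝ)
    (φ₂ : (Fin n → ZMod 2) → (Fin n → ZMod 2))
    (hδ : (1 / 2) * ∑ w ∈ Finset.range (n + 1),
        |((Finset.univ.filter
            (fun v : Fin n → ZMod 2 => hammingDist v (φ₂ v) = w)).card : ℝ)
              / 2 ^ n
          - (n.choose w : ℝ) * α ^ w * (1 - α) ^ (n - w)| ≤ δ) :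
    (1 / 2) * ∑ x : Fin n → ZMod 2,
      |(∑ γ : Equiv.Perm (Fin n), ∑ u : Fin n → ZMod 2,
          if (fun i => (φ₂ u + u) (γ.symm i)) = x then
            (1 / (Fintype.card (Equiv.Perm (Fin n)) : ℝ)) * ((1 : ℝ) / 2 ^ n)
          else 0)
        - α ^ (hammingNorm x) * (1 - α) ^ (n - hammingNorm x)| ≤ δ := by
  set c : ℝ := 1 / (Fintype.card (Perm (Fin n)) : ℝ) * (1 / 2 ^ n) with hc
  set g : (Fin n → ZMod 2) → Fin n → ZMod 2 := fun u => φ₂ u + u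
  have hg : ∀ w, #{u | hammingNorm (g u) = w} = #{v | hammingDist v (φ₂ v) = w} := fun w => by
    simp only [g, add_comm (φ₂ _), ZMod.hammingDist_eq_hammingNorm_add]
  change (1 / 2) * ∑ x, |permutedLaw c g x - α ^ hammingNorm x * (1 - α) ^ (n - hammingNorm x)| ≤ δ
  rw [sum_abs_sub_eq_sum_abs_sub_fiberwise_of_const hammingNorm (t := range (n + 1))
    (fun x => mem_range_succ_iff.2 (hammingNorm_le_card_fintype.trans_eq (Fintype.card_fin n)))
    (fun x y => permutedLaw_eq_of_hammingNorm_eq c g) (fun x y hxy => by rw [hxy])]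
  refine le_of_eq_of_le (congrArg _ (sum_congr rfl fun w _ => ?_)) hδ
  rw [sum_permutedLaw_filter_hammingNorm, hg,
    ZMod.sum_filter_hammingNorm_eq (fun k => α ^ k * (1 - α) ^ (n - k)), Fintype.card_fin]
  have hperm : (Fintype.card (Perm (Fin n)) : ℝ) ≠ 0 := Nat.cast_ne_zero.2 Fintype.card_ne_zero
  congr 1
  rw [nsmul_eq_mul, hc]
  field_simp

/-- **Lemma 5 (channel-input shaping, block-Markov asymmetric channel
coding).**  Let `α ∈ (0,1)`, `δ ≥ 0`, and let `φ₂ : F₂ⁿ → F₂ⁿ` have shaping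
Hamming distance spectrum `W₂ = d_H(Vⁿ, φ₂(Vⁿ))` (for `Vⁿ` i.i.d. uniform)
whose distribution is within total variation `δ` of `Binom(n,α)`.  For `Uⁿ`
i.i.d. uniform on `F₂`, `X̃ⁿ = φ₂(Uⁿ) ⊕ Uⁿ`, and `Γ` a uniformly random
permutation of `{1,…,n}` independent of `Uⁿ`, the law of `Xⁿ = Γ(X̃ⁿ)` is
within total variation `δ` of the i.i.d. `Bern(α)` law. -/
theorem stmt15 (n : ℕ) (α δ : ℝ) (hα : α ∈ Set.Ioo (0 : ℝ) 1) (hδ0 : 0 ≤ δ)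
    (φ₂ : (Fin n → ZMod 2) → (Fin n → ZMod 2))
    (hδ : (1 / 2) * ∑ w ∈ Finset.range (n + 1),
        |((Finset.univ.filter
            (fun v : Fin n → ZMod 2 => hammingDist v (φ₂ v) = w)).card : ℝ)
              / 2 ^ n
          - (n.choose w : ℝ) * α ^ w * (1 - α) ^ (n - w)| ≤ δ) :
    (1 / 2) * ∑ x : Fin n → ZMod 2,
      |(∑ γ : Equiv.Perm (Fin n), ∑ u : Fin n → ZMod 2,
          if (fun i => (φ₂ u + u) (γ.symm i)) = x then
            (1 / (Fintype.card (Equiv.Perm (Fin n)) : ℝ)) * ((1 : ℝ) / 2 ^ n)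
          else 0)
        - α ^ (hammingNorm x) * (1 - α) ^ (n - hammingNorm x)| ≤ δ :=
  stmt15_general n α δ φ₂ hδ
end

section
/- Let p be a pmf on F₂² and δ ≥ 0. Let (X̃ⁿ, Ũⁿ) be a pair of random vectors in F₂ⁿ whose joint type T = type(X̃ⁿ,Ũⁿ) satisfies (1/2)·∑_{t} |P{T = t} − Multinomial(n;p)(t)| ≤ δ (the sum over all quadruples t of nonnegative integers summing to n). Let Γ be a uniformly random permutation of {1,…,n} independent of (X̃ⁿ,Ũⁿ), and set (Xⁿ,Uⁿ) = (Γ(X̃ⁿ), Γ(Ũⁿ)) (the same permutation applied to both vectors). Then (1/2)·∑_{xⁿ,uⁿ} |P{Xⁿ = xⁿ, Uⁿ = uⁿ} − ∏_{i=1}^{n} p(xᵢ,uᵢ)| ≤ δ. (Lemma 6: shaping via joint types in the block-Markov lossy source coding scheme.) -/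
/-- The joint type of a pair of binary vectors:
`jointType x u a b = #{i : xᵢ = a, uᵢ = b}`. -/
def jointType {n : ℕ} (x u : Fin n → ZMod 2) : ZMod 2 → ZMod 2 → ℕ :=
  fun a b => (Finset.univ.filter (fun i => x i = a ∧ u i = b)).card

/-- The multinomial pmf with `n` trials and cell probabilities `p` on `F₂²`,
evaluated at a quadruple `t` of counts (it vanishes unless `∑ t = n`). -/
noncomputable def multinomialPMF (n : ℕ) (p : ZMod 2 → ZMod 2 → ℝ)
    (t : ZMod 2 → ZMod 2 → ℕ) : ℝ :=
  if (∑ a : ZMod 2, ∑ b : ZMod 2, t a b) = n then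
    ((n.factorial : ℝ) / ∏ a : ZMod 2, ∏ b : ZMod 2, ((t a b).factorial : ℝ)) *
      ∏ a : ZMod 2, ∏ b : ZMod 2, p a b ^ (t a b)
  else 0

/-! A uniformly random permutation makes the law of `(Xⁿ, Uⁿ)` uniform on each type class, so
it equals `P{T = t} / |class t|` at every pair of joint type `t`. The i.i.d. law `∏ p(xᵢ, uᵢ)` is
also constant on type classes, with total mass `Multinomial(n; p)(t)` on the class of `t`. Hence
the total variation distance of the permuted law from the i.i.d. law is exactly the total
variation distance of the type `T` from the multinomial law, restricted to realisable types.
The class sizes come from orbit–stabiliser: permutations act transitively on a type class, and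
the stabiliser of a sequence of type `t` has order `∏ tₛ!`, so `|class t| = n! / ∏ tₛ!`. -/

open Finset Equiv
open scoped Nat

section FiberCard

variable {α ι : Type*} [Fintype α] [DecidableEq ι]

/-- The type of the sequence `f`: how often each letter `s` occurs in it. -/
def fiberCard (f : α → ι) (s : ι) : ℕ := #{a | f a = s}

lemma fiberCard_comp_perm (f : α → ι) (γ : Perm α) : fiberCard (f ∘ γ) = fiberCard f :=
  funext fun _ => card_equiv γ (by simp)

lemma exists_perm_comp_eq_of_fiberCard_eq {f g : α → ι} (h : fiberCard f = fiberCard g) :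
    ∃ γ : Perm α, f ∘ γ = g := by
  have e : ∀ s, {a // g a = s} ≃ {a // f a = s} := fun s => Fintype.equivOfCardEq <| by
    simpa [Fintype.card_subtype, fiberCard] using (congrFun h s).symm
  exact ⟨ofFiberEquiv e, funext (ofFiberEquiv_map e)⟩

variable [Fintype ι]

lemma sum_fiberCard (f : α → ι) : ∑ s, fiberCard f s = Fintype.card α :=
  (card_eq_sum_card_fiberwise fun a _ => mem_univ (f a)).symm

lemma prod_comp_eq_prod_pow_fiberCard {M : Type*} [CommMonoid M] (f : α → ι) (p : ι → M) :
    ∏ a, p (f a) = ∏ s, p s ^ fiberCard f s := by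
  rw [← prod_fiberwise' univ f p]
  exact prod_congr rfl fun s _ => prod_const _

variable [DecidableEq α]

lemma card_stabilizer_eq_prod_factorial (f : α → ι) :
    #{γ : Perm α | f ∘ γ = f} = ∏ s, (fiberCard f s)! := by
  simpa [Fintype.card_subtype, fiberCard] using DomMulAct.stabilizer_card f

lemma card_perm_comp_eq (f g : α → ι) :
    #{γ : Perm α | f ∘ γ = g} = if fiberCard g = fiberCard f then ∏ s, (fiberCard f s)! else 0 := by
  split_ifs with h
  · obtain ⟨γ₀, rfl⟩ := exists_perm_comp_eq_of_fiberCard_eq h.symm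
    rw [← card_stabilizer_eq_prod_factorial]
    -- right multiplication by `γ₀⁻¹` carries the transporter onto the stabiliser
    refine card_equiv (Equiv.mulRight γ₀⁻¹) fun γ => ?_
    simp only [mem_filter, mem_univ, true_and, coe_mulRight]
    constructor
    · intro hγ
      ext a
      simpa using congrFun hγ (γ₀⁻¹ a)
    · intro hγ
      ext a
      simpa using congrFun hγ (γ₀ a)
  · rw [card_eq_zero, filter_eq_empty_iff]
    rintro γ - rfl
    exact h (fiberCard_comp_perm f γ)

lemma sum_perm_comp {M : Type*} [AddCommMonoid M] (q : (α → ι) → M) (f : α → ι) :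
    ∑ γ : Perm α, q (f ∘ γ) =
      (∏ s, (fiberCard f s)!) • ∑ g with fiberCard g = fiberCard f, q g := by
  rw [← sum_fiberwise' univ (fun γ : Perm α => f ∘ γ) q, smul_sum, sum_filter]
  refine sum_congr rfl fun g _ => ?_
  rw [sum_const, card_perm_comp_eq, ite_smul, zero_smul]

lemma card_fiberCard_eq_multinomial (f : α → ι) :
    #{g : α → ι | fiberCard g = fiberCard f} = Nat.multinomial univ (fiberCard f) := by
  have hcount := sum_perm_comp (fun _ => 1) f
  rw [sum_const, card_univ, Fintype.card_perm, ← sum_fiberCard f, ← Nat.multinomial_spec,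
    sum_const] at hcount
  simp only [smul_eq_mul, mul_one] at hcount
  exact (Nat.eq_of_mul_eq_mul_left (by positivity) hcount).symm

lemma card_mul_perm_average_eq_sum_filter_fiberCard {𝕜 : Type*} [Field 𝕜] [CharZero 𝕜]
    (q : (α → ι) → 𝕜) (f : α → ι) :
    #{g : α → ι | fiberCard g = fiberCard f} *
        ((Fintype.card (Perm α) : 𝕜)⁻¹ * ∑ γ : Perm α, q (f ∘ γ)) =
      ∑ g with fiberCard g = fiberCard f, q g := by
  have hfac : (Fintype.card (Perm α) : 𝕜) =
      (∏ s, (fiberCard f s)! : ℕ) * Nat.multinomial univ (fiberCard f) := by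
    rw [Fintype.card_perm, ← sum_fiberCard f, ← Nat.multinomial_spec, Nat.cast_mul]
  have hprod : ((∏ s, (fiberCard f s)! : ℕ) : 𝕜) ≠ 0 := Nat.cast_ne_zero.2 (by positivity)
  have hmult : (Nat.multinomial univ (fiberCard f) : 𝕜) ≠ 0 :=
    Nat.cast_ne_zero.2 (Nat.multinomial_pos _ _).ne'
  rw [sum_perm_comp, card_fiberCard_eq_multinomial, hfac, nsmul_eq_mul]
  field_simp

end FiberCard

lemma sum_div_card_fiber_eq_sum_image {β τ 𝕜 : Type*} [Fintype β] [DecidableEq τ] [Field 𝕜]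
    [CharZero 𝕜] (κ : β → τ) (F : τ → 𝕜) :
    ∑ b, F (κ b) / #{b' | κ b' = κ b} = ∑ t ∈ univ.image κ, F t := by
  rw [sum_comp (fun t => F t / #{b' | κ b' = t}) κ]
  refine sum_congr rfl fun t ht => ?_
  obtain ⟨b, -, rfl⟩ := mem_image.1 ht
  have hne : (#{b' | κ b' = κ b} : 𝕜) ≠ 0 :=
    Nat.cast_ne_zero.2 (card_ne_zero.2 ⟨b, by simp⟩)
  rw [nsmul_eq_mul, mul_div_cancel₀ _ hne]

theorem sum_abs_perm_average_sub_prod {α ι : Type*} [Fintype α] [DecidableEq α] [Fintype ι]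
    [DecidableEq ι] (q : (α → ι) → ℝ) (p : ι → ℝ) :
    ∑ f, |(Fintype.card (Perm α) : ℝ)⁻¹ * ∑ γ : Perm α, q (f ∘ γ) - ∏ a, p (f a)| =
      ∑ t ∈ (univ : Finset (α → ι)).image fiberCard,
        |∑ g with fiberCard g = t, q g - Nat.multinomial univ t * ∏ s, p s ^ t s| := by
  rw [← sum_div_card_fiber_eq_sum_image]
  refine sum_congr rfl fun f _ => ?_
  have hpos : (0 : ℝ) < #{g : α → ι | fiberCard g = fiberCard f} := by
    rw [card_fiberCard_eq_multinomial]
    exact_mod_cast Nat.multinomial_pos _ _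
  rw [← card_mul_perm_average_eq_sum_filter_fiberCard, ← prod_comp_eq_prod_pow_fiberCard,
    ← card_fiberCard_eq_multinomial, ← mul_sub, abs_mul, abs_of_pos hpos, mul_div_cancel_left₀ _ hpos.ne']

section Reindexing

variable {α A B : Type*} [Fintype α] [DecidableEq α] [Fintype A] [Fintype B]

lemma sum_sum_arrow_eq_sum_arrow_prod {M : Type*} [AddCommMonoid M] (H : (α → A) → (α → B) → M) :
    ∑ x, ∑ u, H x u = ∑ g : α → A × B, H (Prod.fst ∘ g) (Prod.snd ∘ g) := by
  rw [← Fintype.sum_prod_type', ← (arrowProdEquivProdArrow α (fun _ => A) (fun _ => B)).sum_comp]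
  rfl

lemma sum_sum_ite_comp_symm_eq [DecidableEq A] [DecidableEq B] {M : Type*} [AddCommMonoid M]
    (γ : Perm α) (x : α → A) (u : α → B) (v : (α → A) → (α → B) → M) :
    ∑ xt, ∑ ut, (if (fun i => xt (γ.symm i)) = x ∧ (fun i => ut (γ.symm i)) = u then v xt ut
      else 0) = v (x ∘ γ) (u ∘ γ) := by
  have hx : ∀ xt : α → A, (fun i => xt (γ.symm i)) = x ↔ xt = x ∘ γ := γ.comp_symm_eq x
  have hu : ∀ ut : α → B, (fun i => ut (γ.symm i)) = u ↔ ut = u ∘ γ := γ.comp_symm_eq u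
  simp [hx, hu, ite_and]

end Reindexing

section JointType

variable {n : ℕ}

lemma jointType_eq_curry_fiberCard (g : Fin n → ZMod 2 × ZMod 2) :
    jointType (Prod.fst ∘ g) (Prod.snd ∘ g) = Function.curry (fiberCard g) := by
  funext a b
  simp [jointType, fiberCard, Prod.ext_iff]

lemma sum_sum_jointType (x u : Fin n → ZMod 2) : ∑ a, ∑ b, jointType x u a b = n := by
  have h : jointType x u = Function.curry (fiberCard fun i => (x i, u i)) :=
    jointType_eq_curry_fiberCard (n := n) fun i => (x i, u i)
  rw [h]
  exact (Fintype.sum_prod_type _).symm.trans ((sum_fiberCard _).trans (Fintype.card_fin n))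

/-- `P{T = t}` for the joint type `T` of `(X̃ⁿ, Ũⁿ)` with joint pmf `q`. -/
noncomputable def jointTypeLaw (q : (Fin n → ZMod 2) → (Fin n → ZMod 2) → ℝ)
    (t : ZMod 2 → ZMod 2 → ℕ) : ℝ :=
  ∑ x, ∑ u, if jointType x u = t then q x u else 0

lemma jointTypeLaw_curry (q : (Fin n → ZMod 2) → (Fin n → ZMod 2) → ℝ)
    (t : ZMod 2 × ZMod 2 → ℕ) :
    jointTypeLaw q (Function.curry t) =
      ∑ g with fiberCard g = t, q (Prod.fst ∘ g) (Prod.snd ∘ g) := by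
  rw [jointTypeLaw, sum_sum_arrow_eq_sum_arrow_prod, sum_filter]
  simp only [jointType_eq_curry_fiberCard, Function.curry_injective.eq_iff]

lemma multinomialPMF_curry (p : ZMod 2 → ZMod 2 → ℝ) (t : ZMod 2 × ZMod 2 → ℕ)
    (ht : ∑ s, t s = n) :
    multinomialPMF n p (Function.curry t) = Nat.multinomial univ t * ∏ s, p s.1 s.2 ^ t s := by
  have hspec := Nat.multinomial_spec univ t
  rw [ht] at hspec
  rw [multinomialPMF, if_pos (by rw [← ht, Fintype.sum_prod_type]; rfl)]
  simp only [Function.curry_apply, ← Fintype.prod_prod_type', Prod.mk.eta]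
  rw [← hspec]
  push_cast
  field_simp

lemma summable_abs_jointTypeLaw_sub_multinomialPMF
    (q : (Fin n → ZMod 2) → (Fin n → ZMod 2) → ℝ) (p : ZMod 2 → ZMod 2 → ℝ) :
    Summable fun t => |jointTypeLaw q t - multinomialPMF n p t| := by
  refine summable_of_hasFiniteSupport ((Set.finite_Iic fun _ _ => n).subset fun t ht a b => ?_)
  have hsum : ∑ a, ∑ b, t a b = n := by
    by_contra hne
    have hlaw : jointTypeLaw q t = 0 :=
      sum_eq_zero fun x _ => sum_eq_zero fun u _ =>
        if_neg fun (h : jointType x u = t) => hne (h ▸ sum_sum_jointType x u)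
    refine ht ?_
    dsimp only
    rw [hlaw, multinomialPMF, if_neg hne, sub_zero, abs_zero]
  calc t a b ≤ ∑ b', t a b' := single_le_sum (fun _ _ => Nat.zero_le _) (mem_univ b)
    _ ≤ ∑ a', ∑ b', t a' b' :=
      single_le_sum (f := fun a' => ∑ b', t a' b') (fun _ _ => Nat.zero_le _) (mem_univ a)
    _ = n := hsum

lemma sum_sum_abs_perm_average_sub_prod (q : (Fin n → ZMod 2) → (Fin n → ZMod 2) → ℝ)
    (p : ZMod 2 → ZMod 2 → ℝ) :
    ∑ x, ∑ u, |(Fintype.card (Perm (Fin n)) : ℝ)⁻¹ * ∑ γ : Perm (Fin n), q (x ∘ γ) (u ∘ γ) -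
        ∏ i, p (x i) (u i)| =
      ∑ t ∈ (univ : Finset (Fin n → ZMod 2 × ZMod 2)).image fiberCard,
        |jointTypeLaw q (Function.curry t) - multinomialPMF n p (Function.curry t)| := by
  rw [sum_sum_arrow_eq_sum_arrow_prod]
  refine (sum_abs_perm_average_sub_prod (fun g => q (Prod.fst ∘ g) (Prod.snd ∘ g))
    (fun s => p s.1 s.2)).trans (sum_congr rfl fun t ht => ?_)
  obtain ⟨g, -, rfl⟩ := mem_image.1 ht
  rw [jointTypeLaw_curry, multinomialPMF_curry _ _ ((sum_fiberCard g).trans (Fintype.card_fin n))]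

end JointType

theorem stmt16_general (n : ℕ) (δ : ℝ)
    (p : ZMod 2 → ZMod 2 → ℝ)
    (q : (Fin n → ZMod 2) → (Fin n → ZMod 2) → ℝ)
    (hδ : (1 / 2) * ∑' t : ZMod 2 → ZMod 2 → ℕ,
        |(∑ x : Fin n → ZMod 2, ∑ u : Fin n → ZMod 2,
            if jointType x u = t then q x u else 0)
          - multinomialPMF n p t| ≤ δ) :
    (1 / 2) * ∑ x : Fin n → ZMod 2, ∑ u : Fin n → ZMod 2,
      |(∑ γ : Equiv.Perm (Fin n),
          ∑ xt : Fin n → ZMod 2, ∑ ut : Fin n → ZMod 2,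
          if (fun i => xt (γ.symm i)) = x ∧ (fun i => ut (γ.symm i)) = u then
            (1 / (Fintype.card (Equiv.Perm (Fin n)) : ℝ)) * q xt ut
          else 0)
        - ∏ i, p (x i) (u i)| ≤ δ := by
  have hshuffle : ∀ x u : Fin n → ZMod 2,
      (∑ γ : Perm (Fin n), ∑ xt, ∑ ut,
        if (fun i => xt (γ.symm i)) = x ∧ (fun i => ut (γ.symm i)) = u then
          (1 / (Fintype.card (Perm (Fin n)) : ℝ)) * q xt ut else 0) =
        (Fintype.card (Perm (Fin n)) : ℝ)⁻¹ * ∑ γ : Perm (Fin n), q (x ∘ γ) (u ∘ γ) := by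
    intro x u
    rw [mul_sum, one_div]
    exact sum_congr rfl fun γ _ => sum_sum_ite_comp_symm_eq γ x u fun xt ut => _ * q xt ut
  simp only [hshuffle]
  rw [sum_sum_abs_perm_average_sub_prod]
  calc _ = (1 / 2) * ∑ t ∈ (univ.image fiberCard).image Function.curry,
        |jointTypeLaw q t - multinomialPMF n p t| := by
        rw [sum_image fun _ _ _ _ h => Function.curry_injective h]
    _ ≤ (1 / 2) * ∑' t, |jointTypeLaw q t - multinomialPMF n p t| := by
        gcongr
        exact (summable_abs_jointTypeLaw_sub_multinomialPMF q p).sum_le_tsum _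
          fun _ _ => abs_nonneg _
    _ ≤ δ := hδ

/-- **Lemma 6 (shaping via joint types, block-Markov lossy source coding).**
Let `p` be a pmf on `F₂²` and `(X̃ⁿ,Ũⁿ)` a pair of random vectors (joint pmf
`q`) whose joint type `T = type(X̃ⁿ,Ũⁿ)` is within total variation `δ` of
`Multinomial(n;p)`.  If `Γ` is a uniformly random permutation of `{1,…,n}`
independent of `(X̃ⁿ,Ũⁿ)` and `(Xⁿ,Uⁿ) = (Γ(X̃ⁿ), Γ(Ũⁿ))`, then the joint
law of `(Xⁿ,Uⁿ)` is within total variation `δ` of `∏ᵢ p(xᵢ,uᵢ)`. -/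
theorem stmt16 (n : ℕ) (δ : ℝ)
    (p : ZMod 2 → ZMod 2 → ℝ) (hp0 : ∀ a b, 0 ≤ p a b)
    (hp1 : ∑ a : ZMod 2, ∑ b : ZMod 2, p a b = 1)
    (q : (Fin n → ZMod 2) → (Fin n → ZMod 2) → ℝ)
    (hq0 : ∀ x u, 0 ≤ q x u)
    (hq1 : ∑ x : Fin n → ZMod 2, ∑ u : Fin n → ZMod 2, q x u = 1)
    (hδ : (1 / 2) * ∑' t : ZMod 2 → ZMod 2 → ℕ,
        |(∑ x : Fin n → ZMod 2, ∑ u : Fin n → ZMod 2,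
            if jointType x u = t then q x u else 0)
          - multinomialPMF n p t| ≤ δ) :
    (1 / 2) * ∑ x : Fin n → ZMod 2, ∑ u : Fin n → ZMod 2,
      |(∑ γ : Equiv.Perm (Fin n),
          ∑ xt : Fin n → ZMod 2, ∑ ut : Fin n → ZMod 2,
          if (fun i => xt (γ.symm i)) = x ∧ (fun i => ut (γ.symm i)) = u then
            (1 / (Fintype.card (Equiv.Perm (Fin n)) : ℝ)) * q xt ut
          else 0)
        - ∏ i, p (x i) (u i)| ≤ δ :=
  stmt16_general n δ p q hδ
end
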